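/- arXiv:2604.05956 — 9 statements merged into one kernel-verified Lean document; each statement's English description precedes it below -/
import Mathlib

section
/- Let π₁ : L₀ → L₁ and π₂ : L₁ → L₂ be group homomorphisms, and let H₁, H₂ be subgroups of L₀. Assume (1) ker(π₁) ∩ H₁·H₂ ⊆ (ker(π₁) ∩ H₁)·(ker(π₁) ∩ H₂), and (2) ker(π₂) ∩ π₁(H₁)·π₁(H₂) ⊆ (ker(π₂) ∩ π₁(H₁))·(ker(π₂) ∩ π₁(H₂)). Then ker(π₂ ∘ π₁) ∩ H₁·H₂ ⊆ (ker(π₂ ∘ π₁) ∩ H₁)·(ker(π₂ ∘ π₁) ∩ H₂). -/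
open scoped Pointwise

/-- Let `π₁ : L₀ → L₁` and `π₂ : L₁ → L₂` be group homomorphisms and
`H₁, H₂ ≤ L₀` subgroups. If
`ker π₁ ∩ H₁·H₂ ⊆ (ker π₁ ∩ H₁)·(ker π₁ ∩ H₂)` and
`ker π₂ ∩ π₁(H₁)·π₁(H₂) ⊆ (ker π₂ ∩ π₁(H₁))·(ker π₂ ∩ π₁(H₂))`, then
`ker (π₂ ∘ π₁) ∩ H₁·H₂ ⊆ (ker (π₂ ∘ π₁) ∩ H₁)·(ker (π₂ ∘ π₁) ∩ H₂)`. -/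
theorem stmt0 {L₀ L₁ L₂ : Type*} [Group L₀] [Group L₁] [Group L₂]
    (π₁ : L₀ →* L₁) (π₂ : L₁ →* L₂) (H₁ H₂ : Subgroup L₀)
    (h1 : (π₁.ker : Set L₀) ∩ ((H₁ : Set L₀) * (H₂ : Set L₀)) ⊆
      ((π₁.ker : Set L₀) ∩ (H₁ : Set L₀)) * ((π₁.ker : Set L₀) ∩ (H₂ : Set L₀)))
    (h2 : (π₂.ker : Set L₁) ∩ ((H₁.map π₁ : Set L₁) * (H₂.map π₁ : Set L₁)) ⊆
      ((π₂.ker : Set L₁) ∩ (H₁.map π₁ : Set L₁)) * ((π₂.ker : Set L₁) ∩ (H₂.map π₁ : Set L₁))) :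
    ((π₂.comp π₁).ker : Set L₀) ∩ ((H₁ : Set L₀) * (H₂ : Set L₀)) ⊆
      (((π₂.comp π₁).ker : Set L₀) ∩ (H₁ : Set L₀)) *
        (((π₂.comp π₁).ker : Set L₀) ∩ (H₂ : Set L₀)) := by
  rintro x ⟨hxk, h₁, hh₁, h₂, hh₂, rfl⟩
  have hxk' : π₂ (π₁ (h₁ * h₂)) = 1 := hxk
  have hmem : π₁ (h₁ * h₂) ∈ (π₂.ker : Set L₁) ∩ ((H₁.map π₁ : Set L₁) * (H₂.map π₁ : Set L₁)) := by
    refine ⟨hxk', π₁ h₁, ⟨h₁, hh₁, rfl⟩, π₁ h₂, ⟨h₂, hh₂, rfl⟩, by simp⟩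
  obtain ⟨a, ⟨hak, u, hu, rfl⟩, b, ⟨hbk, v, hv, rfl⟩, hab⟩ := h2 hmem
  have hmem1 : u⁻¹ * (h₁ * h₂) * v⁻¹ ∈ (π₁.ker : Set L₀) ∩ ((H₁ : Set L₀) * (H₂ : Set L₀)) := by
    constructor
    · show π₁ (u⁻¹ * (h₁ * h₂) * v⁻¹) = 1
      have key : π₁ h₁ * π₁ h₂ = π₁ u * π₁ v := by simpa using hab.symm
      simp only [map_mul, map_inv]
      rw [key]; group
    · exact ⟨u⁻¹ * h₁, mul_mem (inv_mem hu) hh₁, h₂ * v⁻¹, mul_mem hh₂ (inv_mem hv),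
        by group⟩
  obtain ⟨p, ⟨hpk, hpH⟩, q, ⟨hqk, hqH⟩, hpq⟩ := h1 hmem1
  refine ⟨u * p, ⟨?_, mul_mem hu hpH⟩, q * v, ⟨?_, mul_mem hqH hv⟩, ?_⟩
  · show π₂ (π₁ (u * p)) = 1
    have hp1 : π₁ p = 1 := hpk
    simp only [map_mul, hp1, mul_one]
    exact hak
  · show π₂ (π₁ (q * v)) = 1
    have hq1 : π₁ q = 1 := hqk
    simp only [map_mul, hq1, one_mul]
    exact hbk
  · have : p * q = u⁻¹ * (h₁ * h₂) * v⁻¹ := hpq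
    have := this
    calc u * p * (q * v) = u * (p * q) * v := by group
      _ = u * (u⁻¹ * (h₁ * h₂) * v⁻¹) * v := by rw [this]
      _ = h₁ * h₂ := by group
end

section
/- Let Γ₀ be a subgroup of G such that for every g ∈ Γ₀ and all nonempty I, J ⊆ {1,…,n}, if Y_I ∩ g·Y_J ≠ ∅ then g ∈ H_I·H_J. Let R be a subgroup of Γ₀ satisfying R ∩ H_I·H_J ⊆ (R ∩ H_I)·(R ∩ H_J) for all nonempty I, J ⊆ {1,…,n}. Then for every k ≥ 2, all nonempty subsets I₁,…,I_k ⊆ {1,…,n}, and all g₁,…,g_k ∈ R with g₁·Y_{I₁} ∩ ⋯ ∩ g_k·Y_{I_k} ≠ ∅, there exist a ∈ R and elements h_j ∈ R ∩ H_{I_j} for 1 ≤ j ≤ k such that g_j = a·h_j for every j. -/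
open scoped Pointwise

/-- Let `G` act on a set `X`, fix subgroups `H₁,…,Hₙ` and subsets
`Y₁,…,Yₙ ⊆ X` with `h • Yᵢ = Yᵢ` for `h ∈ Hᵢ`.  Write `H_I = ⋂_{i∈I} Hᵢ` and
`Y_I = ⋂_{i∈I} Yᵢ` for nonempty `I ⊆ {1,…,n}`.  Suppose `Γ₀ ≤ G` satisfies: for all
`g ∈ Γ₀` and nonempty `I, J`, if `Y_I ∩ g • Y_J ≠ ∅` then `g ∈ H_I · H_J`; and suppose
`R ≤ Γ₀` satisfies `R ∩ H_I·H_J ⊆ (R ∩ H_I)·(R ∩ H_J)` for all nonempty `I, J`.  Then for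
every `k ≥ 2`, nonempty `I₁,…,I_k` and `g₁,…,g_k ∈ R` with
`g₁ • Y_{I₁} ∩ ⋯ ∩ g_k • Y_{I_k} ≠ ∅`, there are `a ∈ R` and `h_j ∈ R ∩ H_{I_j}` with
`g_j = a * h_j` for all `j`. -/
theorem stmt2 {G X : Type*} [Group G] [MulAction G X]
    (n : ℕ) (hn : 1 ≤ n)
    (H : Fin n → Subgroup G) (Y : Fin n → Set X)
    (hHY : ∀ i : Fin n, ∀ h ∈ H i, h • Y i = Y i)
    (Γ₀ : Subgroup G)
    (hΓ₀ : ∀ g ∈ Γ₀, ∀ I J : Finset (Fin n), I.Nonempty → J.Nonempty →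
      ((⋂ i ∈ I, Y i) ∩ g • ⋂ j ∈ J, Y j).Nonempty →
      g ∈ ((⨅ i ∈ I, H i : Subgroup G) : Set G) * ((⨅ j ∈ J, H j : Subgroup G) : Set G))
    (R : Subgroup G) (hRΓ₀ : R ≤ Γ₀)
    (hR : ∀ I J : Finset (Fin n), I.Nonempty → J.Nonempty →
      (R : Set G) ∩ (((⨅ i ∈ I, H i : Subgroup G) : Set G) * ((⨅ j ∈ J, H j : Subgroup G) : Set G))
        ⊆ ((R : Set G) ∩ ((⨅ i ∈ I, H i : Subgroup G) : Set G)) *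
          ((R : Set G) ∩ ((⨅ j ∈ J, H j : Subgroup G) : Set G))) :
    ∀ k : ℕ, 2 ≤ k → ∀ Is : Fin k → Finset (Fin n), (∀ j, (Is j).Nonempty) →
      ∀ g : Fin k → G, (∀ j, g j ∈ R) →
      (⋂ j : Fin k, (g j) • ⋂ i ∈ Is j, Y i).Nonempty →
      ∃ a ∈ R, ∃ h : Fin k → G,
        (∀ j : Fin k, h j ∈ R ∧ h j ∈ (⨅ i ∈ Is j, H i : Subgroup G)) ∧
        ∀ j : Fin k, g j = a * h j := by

  -- auxiliary: an element of `⨅ i ∈ I, H i` fixes `⋂ i ∈ I, Y i` setwise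
  have aux : ∀ (I : Finset (Fin n)) (h : G), h ∈ (⨅ i ∈ I, H i : Subgroup G) →
      h • (⋂ i ∈ I, Y i) = ⋂ i ∈ I, Y i := by
    intro I h hh
    have hmem : ∀ i ∈ I, h ∈ H i := by
      intro i hi
      have := hh
      simp only [Subgroup.mem_iInf] at this
      exact this i hi
    ext x
    simp only [Set.mem_smul_set_iff_inv_smul_mem, Set.mem_iInter]
    have key : ∀ i ∈ I, (h⁻¹ • x ∈ Y i ↔ x ∈ Y i) := by
      intro i hi
      conv_rhs => rw [← hHY i h (hmem i hi)]
      rw [Set.mem_smul_set_iff_inv_smul_mem]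
    constructor
    · intro hx i hi
      exact (key i hi).mp (hx i hi)
    · intro hx i hi
      exact (key i hi).mpr (hx i hi)
  -- the pair case
  have pair : ∀ (I J : Finset (Fin n)), I.Nonempty → J.Nonempty → ∀ g₁ g₂ : G,
      g₁ ∈ R → g₂ ∈ R → ((g₁ • ⋂ i ∈ I, Y i) ∩ (g₂ • ⋂ i ∈ J, Y i)).Nonempty →
      ∃ a p q : G, a ∈ R ∧ p ∈ R ∧ p ∈ (⨅ i ∈ I, H i : Subgroup G) ∧
        q ∈ R ∧ q ∈ (⨅ i ∈ J, H i : Subgroup G) ∧ g₁ = a * p ∧ g₂ = a * q := by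
    intro I J hI hJ g₁ g₂ hg₁ hg₂ ⟨x, hx₁, hx₂⟩
    have hy₁ : g₁⁻¹ • x ∈ ⋂ i ∈ I, Y i := by
      rwa [← Set.mem_smul_set_iff_inv_smul_mem]
    have hy₂ : g₁⁻¹ • x ∈ (g₁⁻¹ * g₂) • ⋂ i ∈ J, Y i := by
      rw [← smul_smul]
      exact Set.smul_mem_smul_set hx₂
    have hmemΓ : g₁⁻¹ * g₂ ∈ Γ₀ := hRΓ₀ (mul_mem (inv_mem hg₁) hg₂)
    have h1 := hΓ₀ (g₁⁻¹ * g₂) hmemΓ I J hI hJ ⟨g₁⁻¹ • x, hy₁, hy₂⟩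
    have h2 := hR I J hI hJ ⟨mul_mem (inv_mem hg₁) hg₂, h1⟩
    rw [Set.mem_mul] at h2
    obtain ⟨p, ⟨hpR, hpH⟩, q, ⟨hqR, hqH⟩, hpq⟩ := h2
    refine ⟨g₁ * p, p⁻¹, q, mul_mem hg₁ hpR, inv_mem hpR, inv_mem hpH, hqR, hqH, ?_, ?_⟩
    · group
    · rw [mul_assoc, hpq]
      group
  intro k hk
  induction k, hk using Nat.le_induction with
  | base =>
    intro Is hIs g hg hne
    obtain ⟨x, hx⟩ := hne
    simp only [Set.mem_iInter] at hx
    obtain ⟨a, p, q, haR, hpR, hpH, hqR, hqH, h1, h2⟩ :=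
      pair (Is 0) (Is 1) (hIs 0) (hIs 1) (g 0) (g 1) (hg 0) (hg 1) ⟨x, hx 0, hx 1⟩
    refine ⟨a, haR, ![p, q], fun j => ?_, fun j => ?_⟩ <;> fin_cases j
    · exact ⟨hpR, hpH⟩
    · exact ⟨hqR, hqH⟩
    · exact h1
    · exact h2
  | succ k hk ih =>
    intro Is hIs g hg hne
    obtain ⟨x, hx⟩ := hne
    simp only [Set.mem_iInter] at hx
    obtain ⟨a, haR, h, hh, hga⟩ :=
      ih (fun j => Is j.castSucc) (fun j => hIs _) (fun j => g j.castSucc)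
        (fun j => hg _) ⟨x, Set.mem_iInter.mpr fun j => hx j.castSucc⟩
    set J : Finset (Fin n) := Finset.univ.biUnion (fun j : Fin k => Is j.castSucc) with hJdef
    have hk0 : (0 : ℕ) < k := by omega
    have hJne : J.Nonempty := by
      obtain ⟨i, hi⟩ := hIs (⟨0, by omega⟩ : Fin k).castSucc
      exact ⟨i, Finset.mem_biUnion.mpr ⟨⟨0, by omega⟩, Finset.mem_univ _, hi⟩⟩
    have hax : a⁻¹ • x ∈ ⋂ i ∈ J, Y i := by
      simp only [Set.mem_iInter]
      intro i hi
      obtain ⟨j, _, hij⟩ := Finset.mem_biUnion.mp hi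
      have hxj := hx j.castSucc
      rw [hga j] at hxj
      have : a⁻¹ • x ∈ h j • ⋂ i ∈ Is j.castSucc, Y i := by
        rw [← smul_smul] at hxj
        rwa [← Set.mem_smul_set_iff_inv_smul_mem]
      rw [aux _ _ (hh j).2] at this
      exact Set.mem_iInter₂.mp this i hij
    have hxa : x ∈ a • ⋂ i ∈ J, Y i := by
      rwa [Set.mem_smul_set_iff_inv_smul_mem]
    obtain ⟨a', p, q, ha'R, hpR, hpH, hqR, hqH, h1, h2⟩ :=
      pair J (Is (Fin.last k)) hJne (hIs _) a (g (Fin.last k)) haR (hg _)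
        ⟨x, hxa, hx (Fin.last k)⟩
    have hpHj : ∀ j : Fin k, p ∈ (⨅ i ∈ Is j.castSucc, H i : Subgroup G) := by
      intro j
      simp only [Subgroup.mem_iInf] at hpH ⊢
      intro i hi
      exact hpH i (Finset.mem_biUnion.mpr ⟨j, Finset.mem_univ _, hi⟩)
    refine ⟨a', ha'R, Fin.lastCases q (fun j => p * h j), ?_, ?_⟩
    · intro j
      refine Fin.lastCases ?_ ?_ j
      · simp only [Fin.lastCases_last]
        exact ⟨hqR, hqH⟩
      · intro j'
        simp only [Fin.lastCases_castSucc]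
        exact ⟨mul_mem hpR (hh j').1, mul_mem (hpHj j') (hh j').2⟩
    · intro j
      refine Fin.lastCases ?_ ?_ j
      · simp only [Fin.lastCases_last]
        exact h2
      · intro j'
        simp only [Fin.lastCases_castSucc]
        rw [hga j', h1, mul_assoc]
end

section
/- For every natural number m, the Catalan number C_m is odd if and only if m + 1 is a power of 2, i.e., there exists an integer r ≥ 0 with m + 1 = 2^r. -/
open Finset

lemma odd_iff_zmod (n : ℕ) : Odd n ↔ (n : ZMod 2) = 1 := by
  rw [Nat.odd_iff, ← ZMod.natCast_mod n 2]
  rcases Nat.mod_two_eq_zero_or_one n with h | h <;> rw [h] <;> simp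

lemma catalan_succ_zmod (n : ℕ) :
    (catalan (n + 1) : ZMod 2) = if Even n then (catalan (n / 2) : ZMod 2) else 0 := by
  have h : (catalan (n + 1) : ZMod 2)
      = ∑ i ∈ range (n + 1), (catalan i : ZMod 2) * (catalan (n - i) : ZMod 2) := by
    rw [catalan_succ,
      Fin.sum_univ_eq_sum_range (fun i => catalan i * catalan (n - i)) (n + 1)]
    push_cast
    rfl
  set f : ℕ → ZMod 2 := fun i => (catalan i : ZMod 2) * (catalan (n - i) : ZMod 2) with hf
  have hsym : ∀ a ∈ range (n + 1), f (n - a) = f a := by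
    intro a ha
    simp only [hf]
    rw [Nat.sub_sub_self (by simpa using Nat.lt_succ_iff.mp (mem_range.mp ha)), mul_comm]
  by_cases he : Even n
  · obtain ⟨k, hk⟩ := he
    have hkn : k ∈ range (n + 1) := by simp; omega
    rw [h, ← Finset.add_sum_erase _ f hkn]
    have hz : ∑ x ∈ (range (n + 1)).erase k, f x = 0 := by
      apply Finset.sum_involution (fun a _ => n - a)
      · intro a ha
        show f a + f (n - a) = 0
        rw [hsym a (mem_of_mem_erase ha)]
        exact CharTwo.add_self_eq_zero _
      · intro a ha _
        have h1 := mem_erase.mp ha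
        have h2 := mem_range.mp h1.2
        omega
      · intro a ha
        have h1 := mem_erase.mp ha
        have h2 := mem_range.mp h1.2
        simp [mem_erase, mem_range]; omega
      · intro a ha
        have h1 := mem_erase.mp ha
        have h2 := mem_range.mp h1.2
        omega
    rw [hz, add_zero, if_pos ⟨k, hk⟩]
    have hk2 : n / 2 = k := by omega
    rw [hk2, hf]
    simp only [hk]
    have h3 : k + k - k = k := by omega
    rw [h3]
    have h4 : ∀ x : ZMod 2, x * x = x := by decide
    exact h4 _
  · rw [if_neg he, h]
    apply Finset.sum_involution (fun a _ => n - a)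
    · intro a ha
      show f a + f (n - a) = 0
      rw [hsym a ha]
      exact CharTwo.add_self_eq_zero _
    · intro a ha _
      have h1 := mem_range.mp ha
      intro hc
      exact he ⟨a, by omega⟩
    · intro a ha
      have h1 := mem_range.mp ha
      simp [mem_range]
    · intro a ha
      have h1 := mem_range.mp ha
      omega

/-- The Catalan number `C_m` is odd if and only if `m + 1` is a power of
two. -/
theorem stmt3 (m : ℕ) : Odd (catalan m) ↔ ∃ r : ℕ, m + 1 = 2 ^ r := by
  induction m using Nat.strong_induction_on with
  | _ m ih =>
    match m with
    | 0 => simp [catalan_zero]; exact ⟨0, rfl⟩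
    | n + 1 =>
      rw [odd_iff_zmod, catalan_succ_zmod]
      by_cases he : Even n
      · rw [if_pos he, ← odd_iff_zmod, ih (n / 2) (by omega)]
        obtain ⟨k, hk⟩ := he
        constructor
        · rintro ⟨r, hr⟩
          exact ⟨r + 1, by rw [pow_succ]; omega⟩
        · rintro ⟨r, hr⟩
          match r with
          | 0 => omega
          | r + 1 => exact ⟨r, by rw [pow_succ] at hr; omega⟩
      · rw [if_neg he]
        constructor
        · intro h01; exact absurd h01 (by decide)
        · rintro ⟨r, hr⟩
          exfalso
          match r with
          | 0 => omega
          | r + 1 =>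
            rw [pow_succ] at hr
            exact he ⟨2 ^ r - 1, by have := Nat.one_le_two_pow (n := r); omega⟩
end

section
/- For every integer m ≥ 1, the binomial coefficient binom(2m, m+1) is odd if and only if m + 1 is a power of 2, i.e., there exists an integer r ≥ 0 with m + 1 = 2^r. -/
/-- For `m ≥ 1`, the binomial coefficient `binom(2m, m+1)` is odd if and
only if `m + 1` is a power of two. -/
theorem stmt4 (m : ℕ) (hm : 1 ≤ m) :
    Odd (Nat.choose (2 * m) (m + 1)) ↔ ∃ r : ℕ, m + 1 = 2 ^ r := by
  set b : ℕ := Nat.log 2 (2 * m) + 2 with hb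
  have hkn : m + 1 ≤ 2 * m := by omega
  have hsub : 2 * m - (m + 1) = m - 1 := by omega
  have hnb : Nat.log 2 (2 * m) < b := by omega
  have hkum := Nat.Prime.emultiplicity_choose (p := 2) (n := 2 * m) (k := m + 1) (b := b)
    Nat.prime_two hkn hnb
  rw [hsub] at hkum
  have hodd : Odd (Nat.choose (2 * m) (m + 1)) ↔
      ∀ i ∈ Finset.Ico 1 b, ¬ (2 ^ i ≤ (m + 1) % 2 ^ i + (m - 1) % 2 ^ i) := by
    rw [Nat.not_even_iff_odd.symm, even_iff_two_dvd, ← emultiplicity_eq_zero, hkum]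
    rw [show ((0 : ℕ∞) = ((0 : ℕ) : ℕ∞)) from rfl, Nat.cast_inj, Finset.card_eq_zero,
      Finset.filter_eq_empty_iff]
  rw [hodd]
  constructor
  · intro h
    -- consider the carry at position `i = log 2 (m+1) + 1`
    set i : ℕ := Nat.log 2 (m + 1) + 1 with hi
    have hle : 2 ^ Nat.log 2 (m + 1) ≤ m + 1 := Nat.pow_log_le_self 2 (by omega)
    have hlt : m + 1 < 2 ^ i := Nat.lt_pow_succ_log_self (by norm_num) (m + 1)
    have himem : i ∈ Finset.Ico 1 b := by
      have h1 : Nat.log 2 (m + 1) ≤ Nat.log 2 (2 * m) := Nat.log_mono_right (by omega)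
      simp only [Finset.mem_Ico]
      omega
    have := h i himem
    rw [Nat.mod_eq_of_lt hlt, Nat.mod_eq_of_lt (by omega)] at this
    -- so 2*m < 2^i = 2 * 2^(log 2 (m+1)), hence m < 2^(log 2 (m+1)) ≤ m+1
    have h2 : m + 1 + (m - 1) < 2 ^ i := by omega
    rw [hi, pow_succ] at h2
    refine ⟨Nat.log 2 (m + 1), ?_⟩
    omega
  · rintro ⟨r, hr⟩ i hi hcarry
    simp only [Finset.mem_Ico] at hi
    have hr1 : 1 ≤ r := by
      rcases Nat.eq_zero_or_pos r with h0 | h; · simp [h0] at hr; omega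
      exact h
    rcases le_or_gt i r with hir | hir
    · -- i ≤ r : (m+1) % 2^i = 0, and the other remainder is < 2^i
      have hdvd : 2 ^ i ∣ m + 1 := hr ▸ pow_dvd_pow 2 hir
      have h1 : (m + 1) % 2 ^ i = 0 := Nat.mod_eq_zero_of_dvd hdvd
      have h2 : (m - 1) % 2 ^ i < 2 ^ i := Nat.mod_lt _ (Nat.pow_pos (n := i) (by norm_num))
      omega
    · -- i > r : both remainders are the numbers themselves
      have hlt1 : m + 1 < 2 ^ i := hr ▸ Nat.pow_lt_pow_right (by norm_num) hir
      have hpow : 2 ^ (r + 1) ≤ 2 ^ i := Nat.pow_le_pow_right (by norm_num) hir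
      rw [Nat.mod_eq_of_lt hlt1, Nat.mod_eq_of_lt (by omega)] at hcarry
      rw [pow_succ] at hpow
      omega
end

section
/- For every integer m ≥ 1, the number of m-tuples (a₁, …, a_m) of positive integers with a₁ < a₂ < ⋯ < a_m and j ≤ a_j ≤ 2j − 1 for every 1 ≤ j ≤ m equals the Catalan number C_m. -/
open Finset

def Pb (m : ℕ) (b : Fin m → ℕ) : Prop := Monotone b ∧ ∀ j : Fin m, b j ≤ (j : ℕ)

section Split

variable {m : ℕ}

lemma touch_nonempty (b : Fin (m+1) → ℕ) (hb : Pb (m+1) b) :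
    (univ.filter (fun j : Fin (m+1) => b j = (j:ℕ))).Nonempty := by
  refine ⟨0, ?_⟩
  have h0 := hb.2 0
  simp only [mem_filter, mem_univ, true_and]
  simpa using Nat.le_zero.mp (by simpa using h0)

/-- the last index where `b j = j` -/
noncomputable def lastTouch (b : Fin (m+1) → ℕ) (hb : Pb (m+1) b) : Fin (m+1) :=
  (univ.filter (fun j : Fin (m+1) => b j = (j:ℕ))).max' (touch_nonempty b hb)

lemma lastTouch_spec (b : Fin (m+1) → ℕ) (hb : Pb (m+1) b) :
    b (lastTouch b hb) = (lastTouch b hb : ℕ) := by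
  have := Finset.max'_mem _ (touch_nonempty b hb)
  exact (Finset.mem_filter.mp this).2

lemma lastTouch_lt (b : Fin (m+1) → ℕ) (hb : Pb (m+1) b) (j : Fin (m+1))
    (h : (lastTouch b hb : ℕ) < (j : ℕ)) : b j < (j : ℕ) := by
  rcases lt_or_eq_of_le (hb.2 j) with h' | h'
  · exact h'
  · exfalso
    have hj : j ∈ univ.filter (fun j : Fin (m+1) => b j = (j:ℕ)) := by simp [h']
    have hle : j ≤ lastTouch b hb := Finset.le_max' _ j hj
    rw [Fin.le_def] at hle
    omega

def takePart (k : Fin (m+1)) (b : Fin (m+1) → ℕ) : Fin (k:ℕ) → ℕ :=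
  fun i => b ⟨i, by have := i.isLt; have := k.isLt; omega⟩

def dropPart (k : Fin (m+1)) (b : Fin (m+1) → ℕ) : Fin (m - (k:ℕ)) → ℕ :=
  fun i => b ⟨(k:ℕ)+1+i, by have := i.isLt; have := k.isLt; omega⟩ - (k:ℕ)

lemma Pb_takePart (k : Fin (m+1)) (b : Fin (m+1) → ℕ) (hb : Pb (m+1) b) :
    Pb (k:ℕ) (takePart k b) := by
  constructor
  · intro i j hij
    refine hb.1 ?_
    rw [Fin.mk_le_mk]
    exact Fin.le_def.mp hij
  · intro i
    have : b ⟨i, by have := i.isLt; have := k.isLt; omega⟩ ≤ (i:ℕ) :=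
      hb.2 ⟨i, by have := i.isLt; have := k.isLt; omega⟩
    exact this

lemma Pb_dropPart (k : Fin (m+1)) (b : Fin (m+1) → ℕ) (hb : Pb (m+1) b)
    (hlt : ∀ j : Fin (m+1), (k:ℕ) < (j:ℕ) → b j < (j:ℕ)) :
    Pb (m - (k:ℕ)) (dropPart k b) := by
  constructor
  · intro i j hij
    apply Nat.sub_le_sub_right
    refine hb.1 ?_
    rw [Fin.mk_le_mk]
    have := Fin.le_def.mp hij
    omega
  · intro i
    have hi : (k:ℕ)+1+(i:ℕ) < m+1 := by have := i.isLt; have := k.isLt; omega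
    have h : b ⟨(k:ℕ)+1+(i:ℕ), hi⟩ < (k:ℕ)+1+(i:ℕ) := hlt ⟨_, hi⟩ (by
      show (k:ℕ) < (k:ℕ)+1+(i:ℕ)
      omega)
    show b ⟨(k:ℕ)+1+(i:ℕ), hi⟩ - (k:ℕ) ≤ (i:ℕ)
    omega

/-- glue two sequences back together -/
def glue (k : Fin (m+1)) (b₁ : Fin (k:ℕ) → ℕ) (b₂ : Fin (m - (k:ℕ)) → ℕ) :
    Fin (m+1) → ℕ := fun j =>
  if h : (j:ℕ) < (k:ℕ) then b₁ ⟨j, h⟩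
  else if h2 : (j:ℕ) = (k:ℕ) then (k:ℕ)
  else b₂ ⟨(j:ℕ) - (k:ℕ) - 1, by have := j.isLt; have := k.isLt; omega⟩ + (k:ℕ)

lemma glue_lt (k : Fin (m+1)) (b₁ : Fin (k:ℕ) → ℕ) (b₂ : Fin (m - (k:ℕ)) → ℕ)
    (j : Fin (m+1)) (h : (j:ℕ) < (k:ℕ)) : glue k b₁ b₂ j = b₁ ⟨j, h⟩ := by
  simp [glue, h]

lemma glue_eq (k : Fin (m+1)) (b₁ : Fin (k:ℕ) → ℕ) (b₂ : Fin (m - (k:ℕ)) → ℕ)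
    (j : Fin (m+1)) (h : (j:ℕ) = (k:ℕ)) : glue k b₁ b₂ j = (k:ℕ) := by
  have h1 : ¬ ((j:ℕ) < (k:ℕ)) := by omega
  simp [glue, h, h1]

lemma glue_gt (k : Fin (m+1)) (b₁ : Fin (k:ℕ) → ℕ) (b₂ : Fin (m - (k:ℕ)) → ℕ)
    (j : Fin (m+1)) (h : (k:ℕ) < (j:ℕ)) :
    glue k b₁ b₂ j = b₂ ⟨(j:ℕ) - (k:ℕ) - 1, by have := j.isLt; omega⟩ + (k:ℕ) := by
  have h1 : ¬ ((j:ℕ) < (k:ℕ)) := by omega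
  have h2 : ¬ ((j:ℕ) = (k:ℕ)) := by omega
  simp [glue, h1, h2]

lemma Pb_glue (k : Fin (m+1)) (b₁ : Fin (k:ℕ) → ℕ) (b₂ : Fin (m - (k:ℕ)) → ℕ)
    (h₁ : Pb _ b₁) (h₂ : Pb _ b₂) : Pb (m+1) (glue k b₁ b₂) := by
  constructor
  · intro i j hij
    rw [Fin.le_def] at hij
    rcases lt_trichotomy ((j:ℕ)) ((k:ℕ)) with hj | hj | hj
    · have hi : (i:ℕ) < (k:ℕ) := by omega
      rw [glue_lt k b₁ b₂ i hi, glue_lt k b₁ b₂ j hj]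
      refine h₁.1 ?_
      rw [Fin.mk_le_mk]
      omega
    · rw [glue_eq k b₁ b₂ j hj]
      rcases lt_or_eq_of_le hij with hij' | hij'
      · have hi : (i:ℕ) < (k:ℕ) := by omega
        rw [glue_lt k b₁ b₂ i hi]
        have hv : b₁ ⟨i, hi⟩ ≤ (i:ℕ) := h₁.2 ⟨i, hi⟩
        omega
      · rw [glue_eq k b₁ b₂ i (by omega)]
    · rw [glue_gt k b₁ b₂ j hj]
      rcases lt_trichotomy ((i:ℕ)) ((k:ℕ)) with hi | hi | hi
      · rw [glue_lt k b₁ b₂ i hi]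
        have hv : b₁ ⟨i, hi⟩ ≤ (i:ℕ) := h₁.2 ⟨i, hi⟩
        omega
      · rw [glue_eq k b₁ b₂ i hi]
        omega
      · rw [glue_gt k b₁ b₂ i hi]
        have hle : (⟨(i:ℕ) - (k:ℕ) - 1, by have := i.isLt; omega⟩ : Fin (m - (k:ℕ))) ≤
            ⟨(j:ℕ) - (k:ℕ) - 1, by have := j.isLt; omega⟩ := by
          rw [Fin.mk_le_mk]; omega
        have := h₂.1 hle
        omega
  · intro j
    rcases lt_trichotomy ((j:ℕ)) ((k:ℕ)) with hj | hj | hj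
    · rw [glue_lt k b₁ b₂ j hj]
      have hv : b₁ ⟨j, hj⟩ ≤ (j:ℕ) := h₁.2 ⟨j, hj⟩
      exact hv
    · rw [glue_eq k b₁ b₂ j hj]; omega
    · rw [glue_gt k b₁ b₂ j hj]
      have hv : b₂ ⟨(j:ℕ) - (k:ℕ) - 1, by have := j.isLt; omega⟩ ≤ (j:ℕ) - (k:ℕ) - 1 :=
        h₂.2 _
      omega

lemma lastTouch_glue (k : Fin (m+1)) (b₁ : Fin (k:ℕ) → ℕ) (b₂ : Fin (m - (k:ℕ)) → ℕ)
    (h₁ : Pb _ b₁) (h₂ : Pb _ b₂) :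
    lastTouch (glue k b₁ b₂) (Pb_glue k b₁ b₂ h₁ h₂) = k := by
  apply le_antisymm
  · apply Finset.max'_le
    intro j hj
    simp only [mem_filter, mem_univ, true_and] at hj
    rw [Fin.le_def]
    by_contra hc
    push_neg at hc
    have hg := glue_gt k b₁ b₂ j hc
    have hb2 : b₂ ⟨(j:ℕ) - (k:ℕ) - 1, by have := j.isLt; omega⟩ ≤ (j:ℕ) - (k:ℕ) - 1 :=
      h₂.2 _
    omega
  · apply Finset.le_max'
    simp only [mem_filter, mem_univ, true_and]
    exact glue_eq k b₁ b₂ k rfl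

lemma sigma_mk_eq {k k' : Fin (m+1)} (h : k = k')
    (c1 : {b : Fin (k:ℕ) → ℕ // Pb (k:ℕ) b}) (c2 : {b : Fin (m-(k:ℕ)) → ℕ // Pb (m-(k:ℕ)) b})
    (d1 : {b : Fin (k':ℕ) → ℕ // Pb (k':ℕ) b}) (d2 : {b : Fin (m-(k':ℕ)) → ℕ // Pb (m-(k':ℕ)) b})
    (e1 : ∀ (i : ℕ) (hi : i < (k:ℕ)) (hi' : i < (k':ℕ)), c1.1 ⟨i, hi⟩ = d1.1 ⟨i, hi'⟩)
    (e2 : ∀ (i : ℕ) (hi : i < m-(k:ℕ)) (hi' : i < m-(k':ℕ)), c2.1 ⟨i, hi⟩ = d2.1 ⟨i, hi'⟩) :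
    (⟨k, c1, c2⟩ : Σ k : Fin (m+1), {b : Fin (k:ℕ) → ℕ // Pb (k:ℕ) b} ×
      {b : Fin (m-(k:ℕ)) → ℕ // Pb (m-(k:ℕ)) b}) = ⟨k', d1, d2⟩ := by
  subst h
  have hc1 : c1 = d1 := by
    apply Subtype.ext
    funext i
    have := e1 i i.isLt i.isLt
    simpa using this
  have hc2 : c2 = d2 := by
    apply Subtype.ext
    funext i
    have := e2 i i.isLt i.isLt
    simpa using this
  rw [hc1, hc2]

/-- The splitting equivalence at the last index where `b j = j`. -/
noncomputable def splitEquiv (m : ℕ) :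
    {b : Fin (m+1) → ℕ // Pb (m+1) b} ≃
    Σ k : Fin (m+1), {b : Fin (k:ℕ) → ℕ // Pb k b} ×
      {b : Fin (m - (k:ℕ)) → ℕ // Pb (m - (k:ℕ)) b} where
  toFun x :=
    ⟨lastTouch x.1 x.2,
      ⟨takePart _ x.1, Pb_takePart _ x.1 x.2⟩,
      ⟨dropPart _ x.1, Pb_dropPart _ x.1 x.2 (lastTouch_lt x.1 x.2)⟩⟩
  invFun y := ⟨glue y.1 y.2.1.1 y.2.2.1, Pb_glue _ _ _ y.2.1.2 y.2.2.2⟩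
  left_inv := by
    rintro ⟨b, hb⟩
    apply Subtype.ext
    funext j
    show glue (lastTouch b hb) _ _ j = b j
    set k := lastTouch b hb with hk
    rcases lt_trichotomy ((j:ℕ)) ((k:ℕ)) with hj | hj | hj
    · rw [glue_lt _ _ _ j hj]
      rfl
    · rw [glue_eq _ _ _ j hj]
      have hjk : j = k := Fin.ext hj
      rw [hjk, hk, lastTouch_spec b hb]
    · rw [glue_gt _ _ _ j hj]
      have hbk : b k ≤ b j := hb.1 (by rw [Fin.le_def]; omega)
      rw [hk, lastTouch_spec b hb] at hbk
      show dropPart k b _ + (k:ℕ) = b j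
      simp only [dropPart]
      have hidx : ((⟨(k:ℕ)+1+((j:ℕ) - (k:ℕ) - 1), by have := j.isLt; omega⟩ : Fin (m+1))) = j := by
        apply Fin.ext
        show (k:ℕ)+1+((j:ℕ) - (k:ℕ) - 1) = (j:ℕ)
        omega
      rw [hidx]
      omega
  right_inv := by
    rintro ⟨k, ⟨b₁, h₁⟩, ⟨b₂, h₂⟩⟩
    have hk := lastTouch_glue k b₁ b₂ h₁ h₂
    have hkv : (lastTouch (glue k b₁ b₂) (Pb_glue k b₁ b₂ h₁ h₂) : ℕ) = (k:ℕ) :=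
      congrArg Fin.val hk
    refine sigma_mk_eq hk _ _ _ _ ?_ ?_
    · intro i hi hi'
      show glue k b₁ b₂ ⟨i, by omega⟩ = b₁ ⟨i, hi'⟩
      rw [glue_lt k b₁ b₂ _ (show ((⟨i, by omega⟩ : Fin (m+1)):ℕ) < (k:ℕ) from hi')]
    · intro i hi hi'
      set K := lastTouch (glue k b₁ b₂) (Pb_glue k b₁ b₂ h₁ h₂) with hK
      show glue k b₁ b₂ ⟨(K:ℕ)+1+i, by omega⟩ - (K:ℕ) = b₂ ⟨i, hi'⟩
      have hidx : (⟨(K:ℕ)+1+i, by omega⟩ : Fin (m+1)) = ⟨(k:ℕ)+1+i, by omega⟩ :=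
        Fin.ext (by show (K:ℕ)+1+i = (k:ℕ)+1+i; omega)
      rw [hidx, glue_gt k b₁ b₂ _ (show (k:ℕ) < _ from by show (k:ℕ) < (k:ℕ)+1+i; omega)]
      have hidx2 : (⟨(k:ℕ)+1+i - (k:ℕ) - 1, by omega⟩ : Fin (m - (k:ℕ))) = ⟨i, hi'⟩ :=
        Fin.ext (by show (k:ℕ)+1+i - (k:ℕ) - 1 = i; omega)
      rw [hidx2]
      omega
end Split

instance Pb.finite (m : ℕ) : Finite {b : Fin m → ℕ // Pb m b} := by
  apply Finite.of_injective
    (fun b => (fun j => (⟨b.1 j, lt_of_le_of_lt (b.2.2 j) j.isLt⟩ : Fin m)))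
  intro b c h
  ext j
  exact congrArg Fin.val (congrFun h j)


noncomputable def fcount (m : ℕ) : ℕ := Nat.card {b : Fin m → ℕ // Pb m b}

lemma fcount_zero : fcount 0 = 1 := by
  have : Unique {b : Fin 0 → ℕ // Pb 0 b} := by
    refine ⟨⟨⟨fun j => j.elim0, ⟨fun i j _ => i.elim0, fun j => j.elim0⟩⟩⟩, ?_⟩
    rintro ⟨b, hb⟩
    ext j
    exact j.elim0
  simp [fcount, Nat.card_unique]

lemma nat_card_sigma {ι : Type*} [Fintype ι] (α : ι → Type*) [∀ i, Finite (α i)] :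
    Nat.card (Σ i, α i) = ∑ i, Nat.card (α i) := by
  letI : ∀ i, Fintype (α i) := fun i => Fintype.ofFinite _
  simp [Nat.card_eq_fintype_card, Fintype.card_sigma]

lemma fcount_succ (m : ℕ) :
    fcount (m+1) = ∑ k : Fin (m+1), fcount k * fcount (m - k) := by
  rw [fcount, Nat.card_congr (splitEquiv m), nat_card_sigma]
  simp [Nat.card_prod, fcount]

lemma fcount_eq_catalan (m : ℕ) : fcount m = catalan m := by
  induction m using Nat.strong_induction_on with
  | _ m ih =>
    match m with
    | 0 => simp [fcount_zero]
    | n + 1 =>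
      rw [fcount_succ, catalan_succ]
      refine Finset.sum_congr rfl fun k _ => ?_
      rw [ih k k.isLt, ih (n - k) (by omega)]

/-- In ℕ, a strictly monotone function on `Fin m` grows at least linearly. -/
lemma strictMono_le {m : ℕ} {a : Fin m → ℕ} (ha : StrictMono a) :
    ∀ d : ℕ, ∀ i j : Fin m, (i : ℕ) + d = (j : ℕ) → a i + d ≤ a j := by
  intro d
  induction d with
  | zero => intro i j h; have : i = j := Fin.ext (by omega); simp [this]
  | succ d ihd =>
    intro i j h
    have hj1 : (j : ℕ) - 1 < m := by omega
    have h1 : a i + d ≤ a ⟨(j : ℕ) - 1, hj1⟩ := ihd i _ (by simp; omega)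
    have h2 : a ⟨(j : ℕ) - 1, hj1⟩ < a j := ha (by simp [Fin.lt_def]; omega)
    omega

/-- Equivalence between the `a`-form and the `b`-form. -/
noncomputable def abEquiv (m : ℕ) :
    {a : Fin m → ℕ // StrictMono a ∧
      ∀ j : Fin m, (j : ℕ) + 1 ≤ a j ∧ a j ≤ 2 * ((j : ℕ) + 1) - 1} ≃
    {b : Fin m → ℕ // Pb m b} where
  toFun a := ⟨fun j => a.1 j - ((j : ℕ) + 1), by
    obtain ⟨a, hsm, hb⟩ := a
    constructor
    · intro i j hij
      dsimp only
      rcases eq_or_lt_of_le hij with rfl | hlt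
      · exact le_rfl
      · have := strictMono_le hsm ((j : ℕ) - (i : ℕ)) i j (by
          have := Fin.lt_def.mp hlt; omega)
        have hi := (hb i).1
        have hj := (hb j).1
        have := Fin.lt_def.mp hlt
        omega
    · intro j
      dsimp only
      have := (hb j).2
      omega⟩
  invFun b := ⟨fun j => b.1 j + (j : ℕ) + 1, by
    obtain ⟨b, hmono, hle⟩ := b
    constructor
    · intro i j hij
      dsimp only
      have h1 : b i ≤ b j := hmono (le_of_lt hij)
      have := Fin.lt_def.mp hij
      omega
    · intro j
      dsimp only
      have := hle j
      omega⟩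
  left_inv := by
    rintro ⟨a, hsm, hb⟩
    ext j
    have := (hb j).1
    simp
    omega
  right_inv := by
    rintro ⟨b, hmono, hle⟩
    ext j
    simp

/-- For `m ≥ 1`, the number of `m`-tuples `(a₁ < a₂ < ⋯ < a_m)` of
positive integers with `j ≤ a_j ≤ 2j − 1` for all `1 ≤ j ≤ m` equals the Catalan number
`C_m`.  (Here `a : Fin m → ℕ` and the `j`-th entry, `1 ≤ j ≤ m`, is `a ⟨j-1⟩`.) -/
theorem stmt5 (m : ℕ) (hm : 1 ≤ m) :
    Nat.card {a : Fin m → ℕ // StrictMono a ∧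
      ∀ j : Fin m, (j : ℕ) + 1 ≤ a j ∧ a j ≤ 2 * ((j : ℕ) + 1) - 1} = catalan m := by
  rw [Nat.card_congr (abEquiv m)]
  exact fcount_eq_catalan m
end

section
/- For every n ≥ 2, the images in the quotient ring F₂[x₁,…,x_{n−1}]/I(n) of the 2^{n−1} squarefree monomials x_{i₁}x_{i₂}⋯x_{i_r} with 1 ≤ i₁ < ⋯ < i_r ≤ n−1 (including the empty product 1) form a basis of F₂[x₁,…,x_{n−1}]/I(n) as a vector space over F₂; in particular this quotient has dimension 2^{n−1} over F₂. -/
open MvPolynomial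

/-- The Lee–Szczarba ideal `I(n)` of `F₂[x₁,…,x_{n−1}]`, generated by
`xᵢ² + xᵢ·xᵢ₊₁` for `1 ≤ i ≤ n−2` together with `x_{n−1}²`.  Here `m = n − 1` is the
number of variables, and the variable `x_{i+1}` (1-based) is `X i` for `i : Fin m`. -/
noncomputable def lsIdeal (m : ℕ) : Ideal (MvPolynomial (Fin m) (ZMod 2)) :=
  Ideal.span
    ({q | ∃ i j : Fin m, (j : ℕ) = (i : ℕ) + 1 ∧ q = X i ^ 2 + X i * X j} ∪
     {q | ∃ i : Fin m, (i : ℕ) = m - 1 ∧ q = X i ^ 2})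

namespace LS

variable {m : ℕ}

def cand (i : Fin m) (S : Finset (Fin m)) : Finset (Fin m) :=
  Finset.univ.filter (fun j => i ≤ j ∧ j ∉ S)

lemma mem_cand {i j : Fin m} {S : Finset (Fin m)} : j ∈ cand i S ↔ i ≤ j ∧ j ∉ S := by
  simp [cand]

def ins (i : Fin m) (S : Finset (Fin m)) : Option (Fin m) :=
  if h : (cand i S).Nonempty then some ((cand i S).min' h) else none

lemma ins_eq_some_iff {i a : Fin m} {S : Finset (Fin m)} :
    ins i S = some a ↔ a ∈ cand i S ∧ ∀ k ∈ cand i S, a ≤ k := by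
  constructor
  · intro h
    unfold ins at h
    split_ifs at h with hne
    · cases h
      exact ⟨Finset.min'_mem _ _, fun k hk => Finset.min'_le _ _ hk⟩
  · rintro ⟨ha, hmin⟩
    unfold ins
    rw [dif_pos ⟨a, ha⟩]
    congr 1
    exact le_antisymm (Finset.min'_le _ _ ha) (Finset.le_min' _ _ _ hmin)

lemma ins_eq_none_iff {i : Fin m} {S : Finset (Fin m)} :
    ins i S = none ↔ cand i S = ∅ := by
  unfold ins
  split_ifs with hne
  · simp only [reduceCtorEq, false_iff]
    exact fun h => (Finset.nonempty_iff_ne_empty.1 hne) h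
  · simp only [true_iff]
    exact Finset.not_nonempty_iff_eq_empty.1 hne

lemma cand_insert (i b : Fin m) (S : Finset (Fin m)) :
    cand i (insert b S) = (cand i S).erase b := by
  ext k
  simp only [mem_cand, Finset.mem_erase, Finset.mem_insert]
  tauto

lemma ins_self {i : Fin m} {S : Finset (Fin m)} (h : i ∉ S) : ins i S = some i := by
  rw [ins_eq_some_iff]
  exact ⟨mem_cand.2 ⟨le_refl i, h⟩, fun k hk => (mem_cand.1 hk).1⟩

lemma ins_insert_of_ne {i a b : Fin m} {S : Finset (Fin m)} (hab : a ≠ b)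
    (h : ins i S = some a) : ins i (insert b S) = some a := by
  rw [ins_eq_some_iff] at h ⊢
  rw [cand_insert]
  exact ⟨Finset.mem_erase.2 ⟨hab, h.1⟩, fun k hk => h.2 k (Finset.mem_of_mem_erase hk)⟩

lemma ins_congr {i j : Fin m} {S T : Finset (Fin m)} (h : cand i S = cand j T) :
    ins i S = ins j T := by
  simp only [ins, h]

/-- one step: insert at the minimal free slot `≥ i`, or die. -/
def H (i : Fin m) (S : Finset (Fin m)) : Option (Finset (Fin m)) :=
  (ins i S).map (fun a => insert a S)

/-- two steps: first `j`, then `i`. -/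
def H2 (i j : Fin m) (S : Finset (Fin m)) : Option (Finset (Fin m)) :=
  (H j S).bind (H i)

lemma H2_comm_le {i j : Fin m} (hij : i ≤ j) (S : Finset (Fin m)) :
    H2 i j S = H2 j i S := by
  cases hb : ins j S with
  | none =>
    have hbe : cand j S = ∅ := ins_eq_none_iff.1 hb
    cases ha : ins i S with
    | none => simp [H2, H, ha, hb]
    | some a =>
      have haS := (mem_cand.1 (ins_eq_some_iff.1 ha).1).2
      have haj : ¬ j ≤ a := by
        intro hja
        have : a ∈ cand j S := mem_cand.2 ⟨hja, haS⟩
        simp [hbe] at this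
      have : ins j (insert a S) = none := by
        rw [ins_eq_none_iff, cand_insert, hbe, Finset.erase_empty]
      simp [H2, H, ha, hb, this]
  | some b =>
    have hbc := (ins_eq_some_iff.1 hb).1
    have hbi : b ∈ cand i S := mem_cand.2 ⟨le_trans hij (mem_cand.1 hbc).1, (mem_cand.1 hbc).2⟩
    obtain ⟨a, ha⟩ : ∃ a, ins i S = some a := by
      unfold ins
      rw [dif_pos ⟨b, hbi⟩]
      exact ⟨_, rfl⟩
    have hab : a ≤ b := (ins_eq_some_iff.1 ha).2 b hbi
    have hac := (ins_eq_some_iff.1 ha).1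
    rcases le_or_gt j a with hja | haj
    · -- a ≥ j, so a = b and both sides insert at the same subsequent spot
      have hba : b ≤ a := (ins_eq_some_iff.1 hb).2 a (mem_cand.2 ⟨hja, (mem_cand.1 hac).2⟩)
      have hEq : a = b := le_antisymm hab hba
      subst hEq
      have hcand : cand i (insert a S) = cand j (insert a S) := by
        ext k
        rw [cand_insert, cand_insert, Finset.mem_erase, Finset.mem_erase, mem_cand, mem_cand]
        constructor
        · rintro ⟨hka, hik, hkS⟩
          refine ⟨hka, ?_, hkS⟩
          have hak : a ≤ k := (ins_eq_some_iff.1 ha).2 k (mem_cand.2 ⟨hik, hkS⟩)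
          exact le_trans hja hak
        · rintro ⟨hka, hjk, hkS⟩
          exact ⟨hka, le_trans hij hjk, hkS⟩
      simp only [H2, H, ha, hb, Option.map_some, Option.bind_some]
      rw [ins_congr hcand]
    · -- a < j
      have hane : a ≠ b := fun h => absurd (h ▸ (mem_cand.1 hbc).1) (not_le_of_gt haj)
      have h1 : ins j (insert a S) = some b := ins_insert_of_ne hane.symm hb
      have h2 : ins i (insert b S) = some a := ins_insert_of_ne hane ha
      simp only [H2, H, ha, hb, h1, h2, Option.map_some, Option.bind_some]
      rw [Finset.insert_comm]

lemma H2_comm (i j : Fin m) (S : Finset (Fin m)) : H2 i j S = H2 j i S := by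
  rcases le_total i j with h | h
  · exact H2_comm_le h S
  · exact (H2_comm_le h S).symm

lemma H2_step {i j : Fin m} (hij : (j : ℕ) = (i : ℕ) + 1) (S : Finset (Fin m)) :
    H2 i i S = H2 i j S := by
  have hiltj : i < j := by
    rw [Fin.lt_def]; omega
  have hjk : ∀ k : Fin m, j ≤ k ↔ i ≤ k ∧ k ≠ i := by
    intro k
    rw [Fin.le_def, Fin.le_def, hij]
    constructor
    · intro h
      exact ⟨by omega, fun he => by subst he; omega⟩
    · rintro ⟨h1, h2⟩
      have : (k : ℕ) ≠ (i : ℕ) := fun he => h2 (Fin.ext he)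
      omega
  cases ha : ins i S with
  | none =>
    have hae : cand i S = ∅ := ins_eq_none_iff.1 ha
    have hbe : ins j S = none := by
      rw [ins_eq_none_iff]
      rw [Finset.eq_empty_iff_forall_notMem] at hae ⊢
      intro k hk
      rcases mem_cand.1 hk with ⟨h1, h2⟩
      exact hae k (mem_cand.2 ⟨le_of_lt (lt_of_lt_of_le hiltj h1), h2⟩)
    simp [H2, H, ha, hbe]
  | some a =>
    by_cases hiS : i ∈ S
    · -- i occupied: cand i S = cand j S, so both first steps agree, and then it's literally equal
      have hc : cand i S = cand j S := by
        ext k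
        rw [mem_cand, mem_cand, hjk k]
        constructor
        · rintro ⟨h1, h2⟩
          exact ⟨⟨h1, fun he => h2 (he ▸ hiS)⟩, h2⟩
        · rintro ⟨⟨h1, _⟩, h2⟩
          exact ⟨h1, h2⟩
      have hb : ins j S = some a := (ins_congr hc) ▸ ha
      simp [H2, H, ha, hb]
    · -- i free: first step of both effectively inserts... 
      have hai : a = i := by
        have := ins_self hiS
        rw [ha] at this
        exact Option.some_inj.1 this
      subst hai
      have hc : cand a (insert a S) = cand j S := by
        ext k
        rw [cand_insert, Finset.mem_erase, mem_cand, mem_cand, hjk k]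
        tauto
      have key : ins a (insert a S) = ins j S := ins_congr hc
      cases hb : ins j S with
      | none =>
        simp [H2, H, ha, hb, key.trans hb]
      | some b =>
        have hbka : b ≠ a := ((hjk b).1 (mem_cand.1 (ins_eq_some_iff.1 hb).1).1).2
        have hbS : b ∉ S := (mem_cand.1 (ins_eq_some_iff.1 hb).1).2
        have h2' : ins a (insert b S) = some a := ins_self (by
          simp only [Finset.mem_insert]
          rintro (h | h)
          · exact hbka h.symm
          · exact hiS h)
        simp only [H2, H, ha, hb, key.trans hb, Option.map_some, Option.bind_some, h2',
          Option.map_some]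
        rw [Finset.insert_comm]

lemma H2_last {i : Fin m} (hi : (i : ℕ) = m - 1) (S : Finset (Fin m)) :
    H2 i i S = none := by
  have htop : ∀ k : Fin m, i ≤ k → k = i := by
    intro k hk
    have : (k : ℕ) < m := k.isLt
    rw [Fin.le_def] at hk
    exact Fin.ext (by omega)
  cases ha : ins i S with
  | none => simp [H2, H, ha]
  | some a =>
    have hai : a = i := htop a (mem_cand.1 (ins_eq_some_iff.1 ha).1).1
    subst hai
    have : ins a (insert a S) = none := by
      rw [ins_eq_none_iff, Finset.eq_empty_iff_forall_notMem]
      intro k hk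
      rcases mem_cand.1 hk with ⟨h1, h2⟩
      exact h2 (by simp [htop k h1])
    simp [H2, H, ha, this]



/-- standard basis vector of the model space. -/
def eV (S : Finset (Fin m)) : Finset (Fin m) → ZMod 2 := Pi.single S 1

def G (i : Fin m) (S : Finset (Fin m)) : Finset (Fin m) → ZMod 2 :=
  (H i S).elim 0 eV

/-- the insertion operator. -/
noncomputable def N (i : Fin m) :
    (Finset (Fin m) → ZMod 2) →ₗ[ZMod 2] (Finset (Fin m) → ZMod 2) where
  toFun v := ∑ S : Finset (Fin m), v S • G i S
  map_add' u v := by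
    simp [add_smul, Finset.sum_add_distrib]
  map_smul' c v := by
    simp [Finset.smul_sum, smul_smul]

lemma N_single (i : Fin m) (S : Finset (Fin m)) : N i (eV S) = G i S := by
  simp only [N, LinearMap.coe_mk, AddHom.coe_mk, eV, Pi.single_apply, ite_smul, zero_smul,
    one_smul]
  rw [Finset.sum_ite_eq' Finset.univ S (fun T => G i T)]
  simp

lemma N_N_single (i j : Fin m) (S : Finset (Fin m)) :
    N i (N j (eV S)) = (H2 i j S).elim 0 eV := by
  rw [N_single]
  unfold G H2
  cases hb : H j S with
  | none => simp
  | some T => simp [N_single, G]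

lemma V_eq_sum (v : Finset (Fin m) → ZMod 2) : v = ∑ S : Finset (Fin m), v S • eV S := by
  funext T
  rw [Finset.sum_apply]
  simp only [Pi.smul_apply, eV, Pi.single_apply, smul_eq_mul, mul_ite, mul_one, mul_zero]
  rw [Finset.sum_ite_eq Finset.univ T v]
  simp

lemma hom_ext {f g : (Finset (Fin m) → ZMod 2) →ₗ[ZMod 2] (Finset (Fin m) → ZMod 2)}
    (h : ∀ S, f (eV S) = g (eV S)) : f = g := by
  refine LinearMap.ext fun v => ?_
  rw [V_eq_sum v, map_sum, map_sum]
  simp only [map_smul, h]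

lemma N_comm (i j : Fin m) : N i * N j = N j * N i :=
  hom_ext fun S => by
    rw [Module.End.mul_apply, Module.End.mul_apply, N_N_single, N_N_single, H2_comm]

lemma N_rel1 {i j : Fin m} (h : (j : ℕ) = (i : ℕ) + 1) : N i * N i = N i * N j :=
  hom_ext fun S => by
    rw [Module.End.mul_apply, Module.End.mul_apply, N_N_single, N_N_single, H2_step h]

lemma N_rel2 {i : Fin m} (h : (i : ℕ) = m - 1) : N i * N i = 0 :=
  hom_ext fun S => by
    rw [Module.End.mul_apply, N_N_single, H2_last h]
    simp

/-- evaluation of polynomials on the commuting operators `N i`. -/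
noncomputable def Φ (m : ℕ) :
    MvPolynomial (Fin m) (ZMod 2) →ₐ[ZMod 2]
      Module.End (ZMod 2) (Finset (Fin m) → ZMod 2) :=
  letI : CommRing (Algebra.adjoin (ZMod 2) (Set.range (N (m := m)))) :=
    Algebra.adjoinCommRingOfComm (ZMod 2)
      (by rintro a ⟨i, rfl⟩ b ⟨j, rfl⟩; exact N_comm i j)
  (Subalgebra.val _).comp
    (MvPolynomial.aeval fun i : Fin m =>
      (⟨N i, Algebra.subset_adjoin ⟨i, rfl⟩⟩ : Algebra.adjoin (ZMod 2) (Set.range N)))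

lemma Φ_X (i : Fin m) : Φ m (X i) = N i := by
  simp [Φ]

lemma ideal_le_ker : lsIdeal m ≤ RingHom.ker (Φ m) := by
  rw [lsIdeal, Ideal.span_le]
  rintro q (⟨i, j, hj, rfl⟩ | ⟨i, hi, rfl⟩)
  · simp only [SetLike.mem_coe, RingHom.mem_ker, map_add, map_mul, map_pow, Φ_X]
    rw [pow_two, N_rel1 hj, ← two_smul (ZMod 2)]
    have h2 : (2 : ZMod 2) = 0 := rfl
    rw [h2, zero_smul]
  · simp only [SetLike.mem_coe, RingHom.mem_ker, map_pow, Φ_X]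
    rw [pow_two, N_rel2 hi]

lemma Φ_prod (S : Finset (Fin m)) : Φ m (∏ i ∈ S, X i) (eV ∅) = eV S := by
  induction S using Finset.induction_on with
  | empty => simp
  | @insert a S ha ih =>
    rw [Finset.prod_insert ha, map_mul, Module.End.mul_apply, ih, Φ_X, N_single]
    unfold G H
    rw [ins_self ha]
    rfl

/-- weight of an exponent vector; reduction steps strictly decrease it. -/
def w (d : Fin m →₀ ℕ) : ℕ := d.sum fun i e => e * (m - (i : ℕ))

lemma w_add (a b : Fin m →₀ ℕ) : w (a + b) = w a + w b :=
  Finsupp.sum_add_index' (fun i => by simp) (fun i e1 e2 => by ring)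

lemma w_single (i : Fin m) (e : ℕ) : w (Finsupp.single i e) = e * (m - (i : ℕ)) :=
  Finsupp.sum_single_index (by simp)

lemma mono_mem : ∀ (k : ℕ) (d : Fin m →₀ ℕ), w d = k →
    Ideal.Quotient.mk (lsIdeal m) (monomial d 1) ∈
      Submodule.span (ZMod 2)
        (Set.range fun S : Finset (Fin m) => Ideal.Quotient.mk (lsIdeal m) (∏ i ∈ S, X i)) := by
  intro k
  induction k using Nat.strong_induction_on with
  | _ k ih =>
    intro d hw
    by_cases hsq : ∀ i, d i ≤ 1
    · have hmono : monomial d (1 : ZMod 2) = ∏ i ∈ d.support, X i := by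
        rw [monomial_eq, map_one, one_mul, Finsupp.prod]
        refine Finset.prod_congr rfl fun i hi => ?_
        have h1 : d i = 1 :=
          le_antisymm (hsq i) (Nat.one_le_iff_ne_zero.2 (Finsupp.mem_support_iff.1 hi))
        rw [h1, pow_one]
      exact Submodule.subset_span ⟨d.support, by rw [hmono]⟩
    · push_neg at hsq
      obtain ⟨i, hi⟩ := hsq
      have hi2 : 2 ≤ d i := hi
      have hle : Finsupp.single i 2 ≤ d := Finsupp.single_le_iff.2 hi2
      have hdd : d - Finsupp.single i 2 + Finsupp.single i 2 = d := tsub_add_cancel_of_le hle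
      set d' := d - Finsupp.single i 2 with hd'
      have hmon : monomial d (1 : ZMod 2) = monomial d' 1 * X i ^ 2 := by
        rw [X_pow_eq_monomial, monomial_mul, mul_one, hdd]
      have hwd : w d = w d' + 2 * (m - (i : ℕ)) := by
        conv_lhs => rw [← hdd]
        rw [w_add, w_single]
      have him : (i : ℕ) < m := i.isLt
      by_cases hlast : (i : ℕ) = m - 1
      · have hgen : (X i ^ 2 : MvPolynomial (Fin m) (ZMod 2)) ∈ lsIdeal m :=
          Ideal.subset_span (Or.inr ⟨i, hlast, rfl⟩)
        rw [hmon, map_mul, Ideal.Quotient.eq_zero_iff_mem.2 hgen, mul_zero]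
        exact Submodule.zero_mem _
      · have hjlt : (i : ℕ) + 1 < m := by omega
        set j : Fin m := ⟨(i : ℕ) + 1, hjlt⟩ with hjdef
        have hgen : (X i ^ 2 + X i * X j : MvPolynomial (Fin m) (ZMod 2)) ∈ lsIdeal m :=
          Ideal.subset_span (Or.inl ⟨i, j, rfl, rfl⟩)
        have hmk : Ideal.Quotient.mk (lsIdeal m) (X i ^ 2) =
            Ideal.Quotient.mk (lsIdeal m) (X i * X j) := by
          rw [Ideal.Quotient.mk_eq_mk_iff_sub_mem]
          have h2 : (X i * X j : MvPolynomial (Fin m) (ZMod 2)) + X i * X j = 0 := by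
            rw [← two_smul (ZMod 2)]
            have h0 : (2 : ZMod 2) = 0 := rfl
            rw [h0, zero_smul]
          have : (X i ^ 2 - X i * X j : MvPolynomial (Fin m) (ZMod 2)) =
              X i ^ 2 + X i * X j := by linear_combination -h2
          rw [this]
          exact hgen
        set d'' := d' + Finsupp.single i 1 + Finsupp.single j 1 with hd''
        have hmono2 : Ideal.Quotient.mk (lsIdeal m) (monomial d 1) =
            Ideal.Quotient.mk (lsIdeal m) (monomial d'' 1) := by
          rw [hmon, map_mul, hmk, ← map_mul]
          congr 1
          have hX : (X i : MvPolynomial (Fin m) (ZMod 2)) = monomial (Finsupp.single i 1) 1 := by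
            rw [← X_pow_eq_monomial, pow_one]
          have hXj : (X j : MvPolynomial (Fin m) (ZMod 2)) = monomial (Finsupp.single j 1) 1 := by
            rw [← X_pow_eq_monomial, pow_one]
          rw [hX, hXj, monomial_mul, monomial_mul, mul_one, mul_one, hd'', add_assoc]
        rw [hmono2]
        have hwd2 : w d'' = w d' + (m - (i : ℕ)) + (m - ((i : ℕ) + 1)) := by
          rw [hd'', w_add, w_add, w_single, w_single, one_mul, one_mul, hjdef]
        exact ih (w d'') (by omega) d'' rfl

lemma span_top :
    (⊤ : Submodule (ZMod 2) (MvPolynomial (Fin m) (ZMod 2) ⧸ lsIdeal m)) ≤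
      Submodule.span (ZMod 2)
        (Set.range fun S : Finset (Fin m) => Ideal.Quotient.mk (lsIdeal m) (∏ i ∈ S, X i)) := by
  intro q _
  obtain ⟨p, rfl⟩ := Ideal.Quotient.mk_surjective q
  rw [← Ideal.Quotient.mkₐ_eq_mk (ZMod 2), MvPolynomial.as_sum p, map_sum]
  refine Submodule.sum_mem _ fun v hv => ?_
  have : monomial v (coeff v p) = coeff v p • monomial v (1 : ZMod 2) := by
    rw [MvPolynomial.smul_eq_C_mul, C_mul_monomial, mul_one]
  rw [this, map_smul]
  refine Submodule.smul_mem _ _ ?_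
  rw [Ideal.Quotient.mkₐ_eq_mk (ZMod 2)]
  exact mono_mem (w v) v rfl

set_option maxHeartbeats 1000000 in
lemma indep :
    LinearIndependent (ZMod 2)
      (fun S : Finset (Fin m) => Ideal.Quotient.mk (lsIdeal m) (∏ i ∈ S, X i)) := by
  rw [linearIndependent_iff']
  intro s g hrel S hS
  have h0 : (∑ T ∈ s, g T • ∏ i ∈ T, X i : MvPolynomial (Fin m) (ZMod 2)) ∈ lsIdeal m := by
    rw [← Ideal.Quotient.eq_zero_iff_mem, ← Ideal.Quotient.mkₐ_eq_mk (ZMod 2), map_sum]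
    simp only [map_smul, Ideal.Quotient.mkₐ_eq_mk (ZMod 2)]
    exact hrel
  have hker : Φ m (∑ T ∈ s, g T • ∏ i ∈ T, X i) = 0 := RingHom.mem_ker.1 (ideal_le_ker h0)
  have heval := congrArg (fun f : Module.End (ZMod 2) (Finset (Fin m) → ZMod 2) => f (eV ∅)) hker
  simp only [map_sum, map_smul, LinearMap.sum_apply, LinearMap.smul_apply,
    LinearMap.zero_apply] at heval
  have heval2 : (∑ T ∈ s, g T • eV T) = (0 : Finset (Fin m) → ZMod 2) := by
    rw [← heval]
    exact Finset.sum_congr rfl fun T _ => by rw [Φ_prod]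
  have hS2 := congrFun heval2 S
  rw [Finset.sum_apply] at hS2
  simp only [Pi.smul_apply, eV, Pi.single_apply, smul_eq_mul, mul_ite, mul_one, mul_zero,
    Pi.zero_apply] at hS2
  rwa [Finset.sum_ite_eq s S g, if_pos hS] at hS2

set_option maxHeartbeats 1000000 in
theorem mainAux (m : ℕ) :
    (∃ b : Module.Basis (Finset (Fin m)) (ZMod 2)
        (MvPolynomial (Fin m) (ZMod 2) ⧸ lsIdeal m),
      ∀ S : Finset (Fin m),
        b S = Ideal.Quotient.mk (lsIdeal m) (∏ i ∈ S, X i)) ∧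
    Module.finrank (ZMod 2) (MvPolynomial (Fin m) (ZMod 2) ⧸ lsIdeal m) = 2 ^ m := by
  refine ⟨⟨Module.Basis.mk indep span_top, fun S => Module.Basis.mk_apply _ _ _⟩, ?_⟩
  rw [Module.finrank_eq_card_basis (Module.Basis.mk indep span_top), Fintype.card_finset,
    Fintype.card_fin]

end LS

/-- For `n ≥ 2`, the images in `F₂[x₁,…,x_{n−1}]/I(n)` of the `2^{n−1}`
squarefree monomials `x_{i₁}⋯x_{i_r}`, `1 ≤ i₁ < ⋯ < i_r ≤ n−1` (indexed by subsets
`S ⊆ {1,…,n−1}`, with the empty product `1`), form a basis over `F₂`; in particular the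
quotient has dimension `2^{n−1}` over `F₂`. -/
theorem stmt7 (n : ℕ) (hn : 2 ≤ n) :
    (∃ b : Module.Basis (Finset (Fin (n - 1))) (ZMod 2)
        (MvPolynomial (Fin (n - 1)) (ZMod 2) ⧸ lsIdeal (n - 1)),
      ∀ S : Finset (Fin (n - 1)),
        b S = Ideal.Quotient.mk (lsIdeal (n - 1)) (∏ i ∈ S, X i)) ∧
    Module.finrank (ZMod 2) (MvPolynomial (Fin (n - 1)) (ZMod 2) ⧸ lsIdeal (n - 1)) =
      2 ^ (n - 1) :=
  LS.mainAux (n - 1)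
end

section
/- For every n ≥ 2 and every 1 ≤ i ≤ n − 1, the image of the elementary symmetric polynomial σ_i(x₁,…,x_{n−1}) in the quotient ring F₂[x₁,…,x_{n−1}]/I(n) is nonzero, i.e., σ_i ∉ I(n). (Via Lee–Szczarba's identification of F₂[x₁,…,x_{n−1}]/I(n) with a subring of H*(LS_n; F₂), under which σ_i maps to the Stiefel–Whitney class w_i(LS_n) of the n-dimensional Lee–Szczarba flat manifold LS_n, this expresses the nonvanishing of w_i(LS_n) for 1 ≤ i ≤ n−1.) -/
open MvPolynomial

namespace Stmt8Aux
open Finset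

def deg {m : ℕ} (d : Fin m →₀ ℕ) : ℕ := ∑ j, d j
def suff {m : ℕ} (d : Fin m →₀ ℕ) (k : Fin m) : ℕ :=
  ∑ j ∈ Finset.univ.filter (fun j => k ≤ j), d j
def P (m i : ℕ) (d : Fin m →₀ ℕ) : Prop :=
  deg d = i ∧ (∀ k : Fin m, suff d k + (k : ℕ) ≤ m) ∧
    (∀ k : Fin m, d k ≠ 0 → m - i ≤ (k : ℕ))

lemma deg_add {m : ℕ} (u v : Fin m →₀ ℕ) : deg (u + v) = deg u + deg v := by
  simp [deg, Finsupp.add_apply, Finset.sum_add_distrib]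
lemma deg_single {m : ℕ} (a : Fin m) (c : ℕ) : deg (Finsupp.single a c) = c := by
  simp [deg, Finsupp.single_apply]
lemma suff_add {m : ℕ} (u v : Fin m →₀ ℕ) (k : Fin m) :
    suff (u + v) k = suff u k + suff v k := by
  simp [suff, Finsupp.add_apply, Finset.sum_add_distrib]
lemma suff_single {m : ℕ} (a k : Fin m) (c : ℕ) :
    suff (Finsupp.single a c) k = if k ≤ a then c else 0 := by
  simp [suff, Finsupp.single_apply, Finset.sum_ite_eq]
lemma suff_mono {m : ℕ} (u : Fin m →₀ ℕ) {a b : Fin m} (hab : a ≤ b) :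
    suff u b ≤ suff u a := by
  apply Finset.sum_le_sum_of_subset
  intro j hj
  simp only [Finset.mem_filter, Finset.mem_univ, true_and] at hj ⊢
  exact le_trans hab hj

lemma key {m i : ℕ} (u : Fin m →₀ ℕ) (a b : Fin m) (hb : (b : ℕ) = (a : ℕ) + 1) :
    P m i (u + Finsupp.single a 2) ↔
      P m i (u + (Finsupp.single a 1 + Finsupp.single b 1)) := by
  have hab : a ≤ b := by rw [Fin.le_def]; omega
  have hanb : a ≠ b := by intro h; rw [h] at hb; omega
  constructor
  · rintro ⟨h1, h2, h3⟩
    refine ⟨?_, ?_, ?_⟩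
    · simp only [deg_add, deg_single] at h1 ⊢; omega
    · intro k
      have hk := h2 k
      have haa := h2 a
      have hmono : suff u b ≤ suff u a := suff_mono u hab
      simp only [suff_add, suff_single] at hk haa ⊢
      simp only [le_refl, if_true, reduceIte] at haa
      by_cases h1k : k ≤ a
      · have h2k : k ≤ b := le_trans h1k hab
        simp [h1k, h2k] at hk ⊢
        omega
      · by_cases h2k : k ≤ b
        · have hkb : k = b := by
            apply Fin.ext
            rw [Fin.le_def] at h2k
            rw [Fin.le_def] at h1k
            omega
          subst hkb
          simp [h1k] at hk ⊢
          omega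
        · simp [h1k, h2k] at hk ⊢
          omega
    · intro k hku
      have haa : m - i ≤ (a : ℕ) := by
        apply h3 a
        simp [Finsupp.add_apply, Finsupp.single_apply]
      by_cases hbk : b = k
      · subst hbk; omega
      · apply h3 k
        simp only [Finsupp.add_apply, Finsupp.single_apply] at hku ⊢
        simp only [hbk, if_false, reduceIte] at hku
        by_cases hak : a = k <;> simp [hak] at hku ⊢ <;> omega
  · rintro ⟨h1, h2, h3⟩
    refine ⟨?_, ?_, ?_⟩
    · simp only [deg_add, deg_single] at h1 ⊢; omega
    · intro k
      have hk := h2 k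
      simp only [suff_add, suff_single] at hk ⊢
      by_cases h1k : k ≤ a
      · have h2k : k ≤ b := le_trans h1k hab
        simp [h1k, h2k] at hk ⊢; omega
      · simp [h1k] at hk ⊢
        split at hk <;> omega
    · intro k hku
      apply h3 k
      simp only [Finsupp.add_apply, Finsupp.single_apply] at hku ⊢
      by_cases hak : a = k <;> simp [hak] at hku ⊢ <;> omega

lemma notP_last {m i : ℕ} (u : Fin m →₀ ℕ) (a : Fin m) (ha : (a : ℕ) = m - 1) :
    ¬ P m i (u + Finsupp.single a 2) := by
  rintro ⟨-, h2, -⟩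
  have := h2 a
  simp only [suff_add, suff_single, le_refl, if_true, reduceIte] at this
  have := a.isLt
  omega

open scoped Classical in
/-- the coefficient-sum functional over exponent vectors satisfying `P` -/
noncomputable def lam (m i : ℕ) (p : MvPolynomial (Fin m) (ZMod 2)) : ZMod 2 :=
  ∑ d ∈ p.support, if P m i d then coeff d p else 0

open scoped Classical in
lemma lam_eq {m i : ℕ} (p : MvPolynomial (Fin m) (ZMod 2)) (s : Finset (Fin m →₀ ℕ))
    (h : p.support ⊆ s) :
    lam m i p = ∑ d ∈ s, if P m i d then coeff d p else 0 := by
  apply Finset.sum_subset h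
  intro d _ hd
  rw [MvPolynomial.notMem_support_iff.mp hd, ite_self]

lemma lam_add {m i : ℕ} (p q : MvPolynomial (Fin m) (ZMod 2)) :
    lam m i (p + q) = lam m i p + lam m i q := by
  classical
  rw [lam_eq p (p.support ∪ q.support) Finset.subset_union_left,
    lam_eq q (p.support ∪ q.support) Finset.subset_union_right,
    lam_eq (p + q) (p.support ∪ q.support) (MvPolynomial.support_add ..),
    ← Finset.sum_add_distrib]
  apply Finset.sum_congr rfl
  intro d _
  rw [coeff_add]
  split <;> simp

lemma lam_zero {m i : ℕ} : lam m i 0 = 0 := by simp [lam]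

open scoped Classical in
lemma lam_monomial {m i : ℕ} (d : Fin m →₀ ℕ) (c : ZMod 2) :
    lam m i (monomial d c) = if P m i d then c else 0 := by
  by_cases hc : c = 0
  · simp [hc, lam_zero]
  · rw [lam_eq (monomial d c) {d} (by rw [MvPolynomial.support_monomial]; simp [hc])]
    simp [coeff_monomial]

lemma lam_sum {m i : ℕ} {α : Type*} (s : Finset α) (f : α → MvPolynomial (Fin m) (ZMod 2)) :
    lam m i (∑ x ∈ s, f x) = ∑ x ∈ s, lam m i (f x) := by
  classical
  induction s using Finset.induction_on with
  | empty => simp [lam_zero]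
  | @insert a s h ih => rw [Finset.sum_insert h, Finset.sum_insert h, lam_add, ih]

lemma lam_mul_gen₁ {m i : ℕ} (r : MvPolynomial (Fin m) (ZMod 2)) (a b : Fin m)
    (hb : (b : ℕ) = (a : ℕ) + 1) : lam m i (r * (X a ^ 2 + X a * X b)) = 0 := by
  classical
  induction r using MvPolynomial.induction_on' with
  | add p q hp hq => rw [add_mul, lam_add, hp, hq, add_zero]
  | monomial u c =>
    have e1 : X (R := ZMod 2) a ^ 2 = monomial (Finsupp.single a 2) 1 := X_pow_eq_monomial
    have e2 : X (R := ZMod 2) a * X b = monomial (Finsupp.single a 1 + Finsupp.single b 1) 1 := by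
      rw [show X (R := ZMod 2) a = monomial (Finsupp.single a 1) 1 by
            rw [← pow_one (X a), X_pow_eq_monomial],
          show X (R := ZMod 2) b = monomial (Finsupp.single b 1) 1 by
            rw [← pow_one (X b), X_pow_eq_monomial],
          monomial_mul, mul_one]
    rw [mul_add, e1, e2, monomial_mul, monomial_mul, mul_one, lam_add,
      lam_monomial, lam_monomial]
    by_cases h : P m i (u + Finsupp.single a 2)
    · rw [if_pos h, if_pos ((key u a b hb).mp h)]
      exact CharTwo.add_self_eq_zero c
    · rw [if_neg h, if_neg (fun h' => h ((key u a b hb).mpr h')), add_zero]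

lemma lam_mul_gen₂ {m i : ℕ} (r : MvPolynomial (Fin m) (ZMod 2)) (a : Fin m)
    (ha : (a : ℕ) = m - 1) : lam m i (r * X a ^ 2) = 0 := by
  classical
  induction r using MvPolynomial.induction_on' with
  | add p q hp hq => rw [add_mul, lam_add, hp, hq, add_zero]
  | monomial u c =>
    rw [X_pow_eq_monomial, monomial_mul, mul_one, lam_monomial,
      if_neg (notP_last u a ha)]

lemma lam_ideal {m i : ℕ} {q : MvPolynomial (Fin m) (ZMod 2)} (hq : q ∈ lsIdeal m) :
    lam m i q = 0 := by
  have H : ∀ r, lam m i (r * q) = 0 := by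
    refine Submodule.span_induction
      (p := fun x _ => ∀ r : MvPolynomial (Fin m) (ZMod 2), lam m i (r * x) = 0)
      ?_ ?_ ?_ ?_ hq
    · rintro x (⟨a, b, hb, rfl⟩ | ⟨a, ha, rfl⟩) r
      · exact lam_mul_gen₁ r a b hb
      · exact lam_mul_gen₂ r a ha
    · intro r; rw [mul_zero, lam_zero]
    · intro x y _ _ hx hy r; rw [mul_add, lam_add, hx r, hy r, add_zero]
    · intro c x _ hx r
      rw [smul_eq_mul, ← mul_assoc]
      exact hx (r * c)
  simpa using H 1

lemma ind_apply {m : ℕ} (s : Finset (Fin m)) (k : Fin m) :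
    (∑ j ∈ s, Finsupp.single j (1 : ℕ)) k = if k ∈ s then 1 else 0 := by
  classical
  rw [Finset.sum_apply']
  simp [Finsupp.single_apply, Finset.sum_ite_eq']

lemma deg_ind {m : ℕ} (s : Finset (Fin m)) :
    deg (∑ j ∈ s, Finsupp.single j (1 : ℕ)) = s.card := by
  classical
  simp only [deg, ind_apply]
  rw [Finset.sum_ite_mem]
  simp

lemma lam_esymm {m i : ℕ} (hi1 : 1 ≤ i) (him : i ≤ m) :
    lam m i (esymm (Fin m) (ZMod 2) i) = 1 := by
  classical
  have hm : 1 ≤ m := le_trans hi1 him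
  rw [esymm_eq_sum_monomial, lam_sum]
  set T : Finset (Fin m) := Finset.univ.filter (fun j => m - i ≤ (j : ℕ)) with hT
  have hTIci : T = Finset.Ici (⟨m - i, by omega⟩ : Fin m) := by
    ext j; simp [hT, Finset.mem_Ici, Fin.le_def]
  have hTcard : T.card = i := by
    rw [hTIci, Fin.card_Ici]
    show m - (m - i) = i
    omega
  have hmemT : ∀ k : Fin m, k ∈ T ↔ m - i ≤ (k : ℕ) := by
    intro k; simp [hT]
  rw [Finset.sum_eq_single_of_mem T (by rw [Finset.mem_powersetCard_univ]; exact hTcard)]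
  · rw [lam_monomial, if_pos]
    refine ⟨by rw [deg_ind, hTcard], ?_, ?_⟩
    · intro k
      have h1 : suff (∑ j ∈ T, Finsupp.single j (1 : ℕ)) k ≤
          (Finset.univ.filter (fun j : Fin m => k ≤ j)).card := by
        calc suff (∑ j ∈ T, Finsupp.single j (1 : ℕ)) k
            ≤ ∑ _j ∈ Finset.univ.filter (fun j : Fin m => k ≤ j), 1 := by
              apply Finset.sum_le_sum
              intro j _
              rw [ind_apply]
              split <;> omega
          _ = (Finset.univ.filter (fun j : Fin m => k ≤ j)).card := by simp
      have h2 : Finset.univ.filter (fun j : Fin m => k ≤ j) = Finset.Ici k := by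
        ext j; simp [Finset.mem_Ici]
      rw [h2, Fin.card_Ici] at h1
      have := k.isLt
      omega
    · intro k hk
      rw [ind_apply] at hk
      by_cases h : k ∈ T
      · exact (hmemT k).mp h
      · simp [h] at hk
  · intro s hs hsne
    rw [lam_monomial, if_neg]
    rintro ⟨-, -, h3⟩
    apply hsne
    rw [Finset.mem_powersetCard_univ] at hs
    have hsub : s ⊆ T := by
      intro k hk
      rw [hmemT]
      apply h3
      rw [ind_apply, if_pos hk]
      omega
    exact Finset.eq_of_subset_of_card_le hsub (by omega)

end Stmt8Aux


/-- For every `n ≥ 2` and `1 ≤ i ≤ n − 1`, the image of the elementary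
symmetric polynomial `σ_i(x₁,…,x_{n−1})` in `F₂[x₁,…,x_{n−1}]/I(n)` is nonzero, i.e.
`σ_i ∉ I(n)`.  (Under Lee–Szczarba's identification this is the nonvanishing of the
Stiefel–Whitney classes `w_i(LS_n)` for `1 ≤ i ≤ n−1`.) -/
theorem stmt8 (n i : ℕ) (hn : 2 ≤ n) (hi1 : 1 ≤ i) (hi2 : i ≤ n - 1) :
    esymm (Fin (n - 1)) (ZMod 2) i ∉ lsIdeal (n - 1) := by
  intro hmem
  have h0 := Stmt8Aux.lam_ideal (i := i) hmem
  rw [Stmt8Aux.lam_esymm hi1 hi2] at h0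
  exact one_ne_zero h0
end

section
/- For every integer k ≥ 1, the image of σ_{2k}(x₁,…,x_{4k})² in the quotient ring F₂[x₁,…,x_{4k}]/I(4k+1) is zero; equivalently, σ_{2k}² ∈ I(4k+1). -/
open MvPolynomial

namespace Stmt10

open Finset
open scoped symmDiff

variable {m : ℕ}

abbrev PP (m : ℕ) := MvPolynomial (Fin m) (ZMod 2)

lemma pp_add_self (p : PP m) : p + p = 0 := by
  rw [← one_smul (ZMod 2) p, ← add_smul]
  have : (1 + 1 : ZMod 2) = 0 := by decide
  rw [this, zero_smul]

lemma gen1_mem {i j : Fin m} (h : (j : ℕ) = (i : ℕ) + 1) :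
    (X i ^ 2 + X i * X j : PP m) ∈ lsIdeal m :=
  Ideal.subset_span (Or.inl ⟨i, j, h, rfl⟩)

lemma gen2_mem {i : Fin m} (h : (i : ℕ) = m - 1) :
    (X i ^ 2 : PP m) ∈ lsIdeal m :=
  Ideal.subset_span (Or.inr ⟨i, h, rfl⟩)

/-- product of variables of a multiset -/
noncomputable def MM (s : Multiset (Fin m)) : PP m := (s.map X).prod

noncomputable def full (m : ℕ) : PP m := ∏ i, (X i : PP m)

def weight (s : Multiset (Fin m)) : ℕ := (s.map fun i => m - 1 - (i : ℕ)).sum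

lemma MM_cons (i : Fin m) (t : Multiset (Fin m)) : MM (i ::ₘ t) = X i * MM t := by
  simp [MM]

lemma MM_nodup_full {s : Multiset (Fin m)} (hnd : s.Nodup) (hc : s.card = m) :
    MM s = full m := by
  have h1 : s.toFinset.val = s := by
    have := Multiset.toFinset_val s
    rw [this, Multiset.dedup_eq_self.2 hnd]
  have h2 : s.toFinset = (univ : Finset (Fin m)) := by
    apply Finset.eq_univ_of_card
    rw [Finset.card_def, h1, hc, Fintype.card_fin]
  rw [full, Finset.prod_eq_multiset_prod, ← h2, h1, MM]

lemma exists_dup {s : Multiset (Fin m)} (hnd : ¬ s.Nodup) :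
    ∃ i t, s = i ::ₘ i ::ₘ t := by
  rw [Multiset.nodup_iff_count_le_one] at hnd
  push_neg at hnd
  obtain ⟨i, hi⟩ := hnd
  have h2 : 2 ≤ s.count i := hi
  rw [Multiset.le_count_iff_replicate_le] at h2
  obtain ⟨t, ht⟩ := Multiset.le_iff_exists_add.1 h2
  exact ⟨i, t, by simpa [Multiset.replicate_succ] using ht⟩

lemma weight_cons (i : Fin m) (t : Multiset (Fin m)) :
    weight (i ::ₘ t) = (m - 1 - (i : ℕ)) + weight t := by
  simp [weight]

lemma engine : ∀ (N : ℕ) (s : Multiset (Fin m)), weight s ≤ N → s.card = m →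
    MM s ∈ lsIdeal m ∨ MM s + full m ∈ lsIdeal m := by
  intro N
  induction N with
  | zero =>
      intro s hw hc
      by_cases hnd : s.Nodup
      · right
        rw [MM_nodup_full hnd hc, pp_add_self]
        exact Ideal.zero_mem _
      · obtain ⟨i, t, rfl⟩ := exists_dup hnd
        left
        have hi : (i : ℕ) = m - 1 := by
          have h1 := i.isLt
          have h2 : weight (i ::ₘ i ::ₘ t) = (m - 1 - (i:ℕ)) + ((m - 1 - (i:ℕ)) + weight t) := by
            rw [weight_cons, weight_cons]
          omega
        rw [MM_cons, MM_cons, ← mul_assoc, ← sq]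
        exact Ideal.mul_mem_right _ _ (gen2_mem hi)
  | succ N ih =>
      intro s hw hc
      by_cases hnd : s.Nodup
      · right
        rw [MM_nodup_full hnd hc, pp_add_self]
        exact Ideal.zero_mem _
      · obtain ⟨i, t, rfl⟩ := exists_dup hnd
        by_cases hi : (i : ℕ) = m - 1
        · left
          rw [MM_cons, MM_cons, ← mul_assoc, ← sq]
          exact Ideal.mul_mem_right _ _ (gen2_mem hi)
        · have him := i.isLt
          have hjlt : (i : ℕ) + 1 < m := by omega
          set j : Fin m := ⟨(i : ℕ) + 1, hjlt⟩ with hjdef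
          have hj : (j : ℕ) = (i : ℕ) + 1 := rfl
          set s' : Multiset (Fin m) := i ::ₘ j ::ₘ t with hs'
          have hkey : MM (i ::ₘ i ::ₘ t) + MM s' ∈ lsIdeal m := by
            have : MM (i ::ₘ i ::ₘ t) + MM s' = (X i ^ 2 + X i * X j) * MM t := by
              rw [hs', MM_cons, MM_cons, MM_cons, MM_cons]
              ring
            rw [this]
            exact Ideal.mul_mem_right _ _ (gen1_mem hj)
          have hw' : weight s' ≤ N := by
            have e1 : weight (i ::ₘ i ::ₘ t) = (m - 1 - (i:ℕ)) + ((m - 1 - (i:ℕ)) + weight t) := by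
              rw [weight_cons, weight_cons]
            have e2 : weight s' = (m - 1 - (i:ℕ)) + ((m - 1 - ((i:ℕ)+1)) + weight t) := by
              rw [hs', weight_cons, weight_cons, hj]
            omega
          have hc' : s'.card = m := by
            rw [hs']
            simpa using hc
          rcases ih s' hw' hc' with h | h
          · left
            have : MM (i ::ₘ i ::ₘ t) = (MM (i ::ₘ i ::ₘ t) + MM s') + MM s' := by
              rw [add_assoc, pp_add_self, add_zero]
            rw [this]
            exact Ideal.add_mem _ hkey h
          · right
            have : MM (i ::ₘ i ::ₘ t) + full m
                = (MM (i ::ₘ i ::ₘ t) + MM s') + (MM s' + full m) := by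
              rw [← add_assoc, add_assoc (MM (i ::ₘ i ::ₘ t)), pp_add_self, add_zero]
            rw [this]
            exact Ideal.add_mem _ hkey h

/-! ### The functional `lam` detecting the coefficient of the full monomial -/

def Fv (m : ℕ) (v : ℕ) : Finset (Fin m) := univ.filter (fun i : Fin m => (i : ℕ) < v)

def pre (a : Fin m →₀ ℕ) (v : ℕ) : ℕ := ∑ i ∈ Fv m v, a i

def deg (a : Fin m →₀ ℕ) : ℕ := ∑ i, a i

def Good (m : ℕ) (a : Fin m →₀ ℕ) : Prop := deg a = m ∧ ∀ v ≤ m, v ≤ pre a v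

open Classical in
noncomputable def lam (p : PP m) : ZMod 2 :=
  ∑ a ∈ p.support, (if Good m a then coeff a p else 0)

open Classical in
lemma lam_eq_sum_superset {p : PP m} {s : Finset (Fin m →₀ ℕ)} (hs : p.support ⊆ s) :
    lam p = ∑ a ∈ s, (if Good m a then coeff a p else 0) := by
  rw [lam]
  apply Finset.sum_subset hs
  intro a _ ha
  rw [MvPolynomial.notMem_support_iff.1 ha]
  split <;> rfl

lemma lam_add (p q : PP m) : lam (p + q) = lam p + lam q := by
  classical
  rw [lam_eq_sum_superset (s := p.support ∪ q.support ∪ (p+q).support) (by intro x hx; simp [hx]),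
    lam_eq_sum_superset (p := p) (s := p.support ∪ q.support ∪ (p+q).support) (by intro x hx; simp [hx]),
    lam_eq_sum_superset (p := q) (s := p.support ∪ q.support ∪ (p+q).support) (by intro x hx; simp [hx]),
    ← Finset.sum_add_distrib]
  apply Finset.sum_congr rfl
  intro a _
  by_cases h : Good m a <;> simp [h, MvPolynomial.coeff_add]

lemma lam_zero : lam (0 : PP m) = 0 := by simp [lam]

lemma lam_sum {ι : Type*} (s : Finset ι) (f : ι → PP m) :
    lam (∑ i ∈ s, f i) = ∑ i ∈ s, lam (f i) := by
  classical
  induction s using Finset.cons_induction with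
  | empty => simp [lam_zero]
  | cons a s' ha ih => rw [Finset.sum_cons, lam_add, ih, Finset.sum_cons]

open Classical in
lemma lam_monomial (a : Fin m →₀ ℕ) (c : ZMod 2) :
    lam (monomial a c) = if Good m a then c else 0 := by
  by_cases hc : c = 0
  · simp [hc, lam_zero]
  · rw [lam, MvPolynomial.support_monomial, if_neg hc, Finset.sum_singleton,
      MvPolynomial.coeff_monomial, if_pos rfl]

lemma pre_mono (a : Fin m →₀ ℕ) {v w : ℕ} (h : v ≤ w) : pre a v ≤ pre a w := by
  apply Finset.sum_le_sum_of_subset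
  intro i hi
  simp only [Fv, Finset.mem_filter, Finset.mem_univ, true_and] at hi ⊢
  omega

lemma pre_le_deg (a : Fin m →₀ ℕ) (v : ℕ) : pre a v ≤ deg a := by
  apply Finset.sum_le_sum_of_subset
  intro i _; exact Finset.mem_univ i

lemma pre_add (a b : Fin m →₀ ℕ) (v : ℕ) : pre (a + b) v = pre a v + pre b v := by
  simp [pre, Finset.sum_add_distrib]

lemma pre_single (i : Fin m) (c : ℕ) (v : ℕ) :
    pre (Finsupp.single i c) v = if (i : ℕ) < v then c else 0 := by
  classical
  by_cases h : (i : ℕ) < v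
  · rw [if_pos h, pre, Finset.sum_eq_single_of_mem i (by simp [Fv, h])]
    · simp
    · intro b _ hb; exact Finsupp.single_eq_of_ne' (Ne.symm hb)
  · rw [if_neg h, pre, Finset.sum_eq_zero]
    intro x hx
    simp only [Fv, Finset.mem_filter, Finset.mem_univ, true_and] at hx
    have : x ≠ i := by rintro rfl; exact h hx
    exact Finsupp.single_eq_of_ne' (Ne.symm this)

lemma deg_add (a b : Fin m →₀ ℕ) : deg (a + b) = deg a + deg b := by
  simp [deg, Finset.sum_add_distrib]

lemma deg_single (i : Fin m) (c : ℕ) : deg (Finsupp.single i c) = c := by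
  classical
  rw [deg, Finset.sum_eq_single i]
  · simp
  · intro b _ hb; exact Finsupp.single_eq_of_ne' (Ne.symm hb)
  · intro h; exact absurd (Finset.mem_univ i) h

lemma good_equiv {b : Fin m →₀ ℕ} {i j : Fin m} (hj : (j : ℕ) = (i : ℕ) + 1) :
    (Good m (b + Finsupp.single i 1 + Finsupp.single i 1) ↔
     Good m (b + Finsupp.single i 1 + Finsupp.single j 1)) := by
  have hdeg : deg (b + Finsupp.single i 1 + Finsupp.single i 1)
      = deg (b + Finsupp.single i 1 + Finsupp.single j 1) := by
    simp [deg_add, deg_single]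
  have hpre : ∀ v : ℕ, v ≠ (i : ℕ) + 1 →
      pre (b + Finsupp.single i 1 + Finsupp.single i 1) v
        = pre (b + Finsupp.single i 1 + Finsupp.single j 1) v := by
    intro v hv
    simp only [pre_add, pre_single, hj]
    by_cases h1 : (i : ℕ) < v <;> by_cases h2 : (i : ℕ) + 1 < v <;>
      simp [h1, h2] <;> omega
  have hpi : pre (b + Finsupp.single i 1 + Finsupp.single i 1) (i : ℕ) = pre b (i : ℕ) := by
    simp [pre_add, pre_single]
  have hs1 : pre (b + Finsupp.single i 1 + Finsupp.single i 1) ((i : ℕ) + 1)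
      = pre b ((i : ℕ) + 1) + 2 := by
    simp [pre_add, pre_single]
  have hs2 : pre (b + Finsupp.single i 1 + Finsupp.single j 1) ((i : ℕ) + 1)
      = pre b ((i : ℕ) + 1) + 1 := by
    simp [pre_add, pre_single, hj]
  have hmono := pre_mono b (show (i:ℕ) ≤ (i:ℕ) + 1 by omega)
  constructor
  · rintro ⟨hd, hp⟩
    refine ⟨hdeg ▸ hd, fun v hv => ?_⟩
    by_cases hvi : v = (i : ℕ) + 1
    · subst hvi
      have hi' := hp (i : ℕ) (by omega)
      rw [hpi] at hi'
      omega
    · rw [← hpre v hvi]; exact hp v hv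
  · rintro ⟨hd, hp⟩
    refine ⟨hdeg ▸ hd, fun v hv => ?_⟩
    by_cases hvi : v = (i : ℕ) + 1
    · subst hvi
      have hi' := hp (i : ℕ) (by omega)
      rw [← hpre (i : ℕ) (by omega), hpi] at hi'
      omega
    · rw [hpre v hvi]; exact hp v hv

lemma not_good_top {b : Fin m →₀ ℕ} {i : Fin m} (hi : (i : ℕ) = m - 1) :
    ¬ Good m (b + Finsupp.single i 1 + Finsupp.single i 1) := by
  rintro ⟨hd, hp⟩
  have him := i.isLt
  rw [deg_add, deg_add, deg_single] at hd
  have hm2 : 2 ≤ m := by omega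
  have h1 := hp (m - 1) (by omega)
  have h2 : pre (b + Finsupp.single i 1 + Finsupp.single i 1) (m-1)
      = pre b (m-1) := by
    simp [pre_add, pre_single, hi]
  have h3 := pre_le_deg b (m - 1)
  omega

lemma zmod2_add_self (x : ZMod 2) : x + x = 0 := by
  have h : ∀ y : ZMod 2, y + y = 0 := by decide
  exact h x

lemma X_as_monomial (i : Fin m) : (X i : PP m) = monomial (Finsupp.single i 1) 1 := by
  rw [← X_pow_eq_monomial, pow_one]

lemma lam_monomial_mul_gen1 (b : Fin m →₀ ℕ) (c : ZMod 2) {i j : Fin m}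
    (hj : (j : ℕ) = (i : ℕ) + 1) :
    lam (monomial b c * (X i ^ 2 + X i * X j)) = 0 := by
  have e1 : monomial b c * ((X i : PP m) ^ 2 + X i * X j)
      = monomial (b + Finsupp.single i 1 + Finsupp.single i 1) c
        + monomial (b + Finsupp.single i 1 + Finsupp.single j 1) c := by
    rw [X_as_monomial i, X_as_monomial j, sq]
    simp only [monomial_mul, mul_add, mul_one, add_assoc]
  rw [e1, lam_add, lam_monomial, lam_monomial]
  by_cases h : Good m (b + Finsupp.single i 1 + Finsupp.single i 1)
  · rw [if_pos h, if_pos ((good_equiv hj).1 h), zmod2_add_self]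
  · rw [if_neg h, if_neg (fun h2 => h ((good_equiv hj).2 h2)), add_zero]

lemma lam_monomial_mul_gen2 (b : Fin m →₀ ℕ) (c : ZMod 2) {i : Fin m}
    (hi : (i : ℕ) = m - 1) :
    lam (monomial b c * X i ^ 2) = 0 := by
  have e1 : monomial b c * (X i : PP m) ^ 2
      = monomial (b + Finsupp.single i 1 + Finsupp.single i 1) c := by
    rw [X_as_monomial i, sq]
    simp only [monomial_mul, mul_one, add_assoc]
  rw [e1, lam_monomial, if_neg (not_good_top hi)]

def genSet (m : ℕ) : Set (PP m) :=
  {q | ∃ i j : Fin m, (j : ℕ) = (i : ℕ) + 1 ∧ q = X i ^ 2 + X i * X j} ∪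
    {q | ∃ i : Fin m, (i : ℕ) = m - 1 ∧ q = X i ^ 2}

lemma lam_mul_gen (q : PP m) {g : PP m} (hg : g ∈ genSet m) : lam (q * g) = 0 := by
  conv_lhs => rw [q.as_sum, Finset.sum_mul, lam_sum]
  apply Finset.sum_eq_zero
  intro a _
  rcases hg with ⟨i, j, hj, rfl⟩ | ⟨i, hi, rfl⟩
  · exact lam_monomial_mul_gen1 _ _ hj
  · exact lam_monomial_mul_gen2 _ _ hi

lemma lam_smul (c : ZMod 2) (p : PP m) : lam (c • p) = c * lam p := by
  have h : ∀ y : ZMod 2, y = 0 ∨ y = 1 := by decide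
  have : c = 0 ∨ c = 1 := h c
  rcases this with rfl | rfl
  · simp [lam_zero]
  · simp

lemma lam_ideal {p : PP m} (hp : p ∈ lsIdeal m) : lam p = 0 := by
  classical
  set J : Submodule (ZMod 2) (PP m) :=
    Submodule.span (ZMod 2) {p : PP m | ∃ q g, g ∈ genSet m ∧ p = q * g} with hJ
  have hmul : ∀ x ∈ J, ∀ q : PP m, q * x ∈ J := by
    intro x hx
    induction hx using Submodule.span_induction with
    | mem x hx =>
        intro q
        obtain ⟨q', g, hg, rfl⟩ := hx
        exact Submodule.subset_span ⟨q * q', g, hg, (mul_assoc q q' g).symm⟩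
    | zero => intro q; rw [mul_zero]; exact Submodule.zero_mem _
    | add x y hx hy ihx ihy =>
        intro q; rw [mul_add]; exact Submodule.add_mem _ (ihx q) (ihy q)
    | smul c x hx ihx =>
        intro q; rw [mul_smul_comm]; exact Submodule.smul_mem _ _ (ihx q)
  have hsub : p ∈ J := by
    rw [lsIdeal] at hp
    induction hp using Submodule.span_induction with
    | mem x hx =>
        exact Submodule.subset_span ⟨1, x, hx, (one_mul x).symm⟩
    | zero => exact Submodule.zero_mem _
    | add x y hx hy ihx ihy => exact Submodule.add_mem _ ihx ihy
    | smul q x hx ihx => exact hmul x ihx q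
  clear hp
  induction hsub using Submodule.span_induction with
  | mem x hx =>
      obtain ⟨q, g, hg, rfl⟩ := hx
      exact lam_mul_gen q hg
  | zero => exact lam_zero
  | add x y hx hy ihx ihy => rw [lam_add, ihx, ihy, add_zero]
  | smul c x hx ihx => rw [lam_smul, ihx, mul_zero]


/-! ### Counting subsets -/

def cnt (A : Finset (Fin m)) (v : ℕ) : ℕ := (A.filter fun i : Fin m => (i : ℕ) < v).card

lemma cnt_zero (A : Finset (Fin m)) : cnt A 0 = 0 := by
  simp [cnt]

lemma cnt_mono (A : Finset (Fin m)) {v w : ℕ} (h : v ≤ w) : cnt A v ≤ cnt A w := by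
  apply Finset.card_le_card
  intro i hi
  simp only [Finset.mem_filter] at hi ⊢
  exact ⟨hi.1, lt_of_lt_of_le hi.2 h⟩

lemma cnt_step (A : Finset (Fin m)) (v : ℕ) : cnt A (v + 1) ≤ cnt A v + 1 := by
  classical
  have hsub : (A.filter fun i : Fin m => (i : ℕ) < v + 1)
      ⊆ (A.filter fun i : Fin m => (i : ℕ) < v) ∪ (univ.filter fun i : Fin m => (i : ℕ) = v) := by
    intro i hi
    simp only [Finset.mem_filter, Finset.mem_union, Finset.mem_univ, true_and] at hi ⊢
    obtain ⟨hiA, hlt⟩ := hi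
    by_cases hv : (i : ℕ) < v
    · exact Or.inl ⟨hiA, hv⟩
    · exact Or.inr (by omega)
  have h1 : (univ.filter fun i : Fin m => (i : ℕ) = v).card ≤ 1 := by
    apply Finset.card_le_one.2
    intro a ha b hb
    simp only [Finset.mem_filter] at ha hb
    exact Fin.ext (ha.2.trans hb.2.symm)
  calc cnt A (v+1) ≤ _ := Finset.card_le_card hsub
    _ ≤ _ := Finset.card_union_le _ _
    _ ≤ cnt A v + 1 := by simp only [cnt]; omega

lemma cnt_top (A : Finset (Fin m)) {v : ℕ} (h : m ≤ v) : cnt A v = A.card := by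
  rw [cnt, Finset.filter_true_of_mem]
  intro i _
  exact lt_of_lt_of_le i.isLt h

lemma card_Fv {v : ℕ} (h : v ≤ m) : (Fv m v).card = v := by
  induction v with
  | zero => simp [Fv]
  | succ v ih =>
      have hv : v < m := h
      have : Fv m (v + 1) = insert ⟨v, hv⟩ (Fv m v) := by
        ext i
        simp only [Fv, Finset.mem_filter, Finset.mem_univ, true_and, Finset.mem_insert,
          Fin.ext_iff]
        omega
      rw [this, Finset.card_insert_of_notMem (by simp [Fv]), ih (by omega)]

lemma filter_symmDiff' (A B : Finset (Fin m)) (p : Fin m → Prop) [DecidablePred p] :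
    (A ∆ B).filter p = (A.filter p) ∆ (B.filter p) := by
  ext i
  simp only [Finset.mem_filter, Finset.mem_symmDiff]
  tauto

lemma filter_lt_subset_Fv (A : Finset (Fin m)) (v : ℕ) :
    (A.filter fun i : Fin m => (i : ℕ) < v) ⊆ Fv m v := by
  intro i hi
  simp only [Finset.mem_filter, Fv, Finset.mem_univ, true_and] at hi ⊢
  exact hi.2

lemma cnt_le (A : Finset (Fin m)) {v : ℕ} (h : v ≤ m) : cnt A v ≤ v := by
  have h2 := Finset.card_le_card (filter_lt_subset_Fv A v)
  rw [card_Fv h] at h2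
  exact h2

lemma Fv_filter {v w : ℕ} (h : v ≤ w) :
    ((Fv m w).filter fun i : Fin m => (i : ℕ) < v) = Fv m v := by
  ext i
  simp only [Fv, Finset.mem_filter, Finset.mem_univ, true_and]
  omega

lemma Fv_filter_self {v w : ℕ} (h : w ≤ v) :
    ((Fv m w).filter fun i : Fin m => (i : ℕ) < v) = Fv m w := by
  ext i
  simp only [Fv, Finset.mem_filter, Finset.mem_univ, true_and]
  omega

lemma cnt_symmDiff_lo (A : Finset (Fin m)) {v w : ℕ} (hvw : v ≤ w) (hw : w ≤ m) :
    cnt (A ∆ Fv m w) v + cnt A v = v := by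
  classical
  rw [cnt, filter_symmDiff', Fv_filter hvw,
    symmDiff_of_le (filter_lt_subset_Fv A v), Finset.card_sdiff_of_subset (filter_lt_subset_Fv A v),
    card_Fv (le_trans hvw hw)]
  have := cnt_le A (le_trans hvw hw)
  rw [cnt] at this ⊢
  omega

lemma card_symmDiff' (X Y : Finset (Fin m)) :
    (X ∆ Y).card + 2 * (X ∩ Y).card = X.card + Y.card := by
  classical
  have h1 : (X ∆ Y) = (X \ Y) ∪ (Y \ X) := rfl
  have hd : Disjoint (X \ Y) (Y \ X) := by
    apply Finset.disjoint_left.2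
    intro a ha hb
    simp only [Finset.mem_sdiff] at ha hb
    exact hb.2 ha.1
  have h2 := Finset.card_sdiff_add_card_inter X Y
  have h3 := Finset.card_sdiff_add_card_inter Y X
  rw [Finset.inter_comm Y X] at h3
  rw [h1, Finset.card_union_of_disjoint hd]
  omega

lemma cnt_symmDiff_hi (A : Finset (Fin m)) {v w : ℕ} (hwv : w ≤ v) (hw : w ≤ m) :
    cnt (A ∆ Fv m w) v + 2 * cnt A w = cnt A v + w := by
  classical
  rw [cnt, filter_symmDiff', Fv_filter_self hwv]
  have h1 := card_symmDiff' (A.filter fun i : Fin m => (i : ℕ) < v) (Fv m w)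
  have h2 : (A.filter fun i : Fin m => (i : ℕ) < v) ∩ Fv m w
      = A.filter fun i : Fin m => (i : ℕ) < w := by
    ext i
    simp only [Finset.mem_filter, Finset.mem_inter, Fv, Finset.mem_univ, true_and]
    constructor
    · rintro ⟨⟨h3, h4⟩, h5⟩; exact ⟨h3, h5⟩
    · rintro ⟨h3, h4⟩; exact ⟨⟨h3, by omega⟩, h4⟩
  rw [h2] at h1
  rw [card_Fv hw] at h1
  rw [cnt, cnt]
  omega

lemma walk_up (C : Finset (Fin m)) : ∀ n : ℕ, n + 1 ≤ 2 * cnt C n →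
    ∃ v ≤ n, 2 * cnt C v = v + 1 := by
  intro n
  induction n with
  | zero => intro h; rw [cnt_zero] at h; omega
  | succ n ih =>
      intro h
      by_cases he : 2 * cnt C (n + 1) = n + 2
      · exact ⟨n + 1, le_refl _, he⟩
      · have h2 := cnt_step C n
        have h3 : n + 1 ≤ 2 * cnt C n := by omega
        obtain ⟨v, hv, he2⟩ := ih h3
        exact ⟨v, by omega, he2⟩

lemma walk_down (A : Finset (Fin m)) : ∀ n : ℕ, 2 * cnt A n + 1 ≤ n →
    ∃ v ≤ n, 2 * cnt A v + 1 = v := by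
  intro n
  induction n with
  | zero => intro h; omega
  | succ n ih =>
      intro h
      by_cases he : 2 * cnt A (n + 1) + 1 = n + 1
      · exact ⟨n + 1, le_refl _, he⟩
      · have h2 : cnt A n ≤ cnt A (n+1) := cnt_mono A (by omega)
        have h3 : 2 * cnt A n + 1 ≤ n := by omega
        obtain ⟨v, hv, he2⟩ := ih h3
        exact ⟨v, by omega, he2⟩


/-! ### goodSet and the involution -/

def goodSet (m : ℕ) (A : Finset (Fin m)) : Prop := ∀ v ≤ m, v ≤ 2 * cnt A v

lemma badex {A : Finset (Fin m)} (h : ¬ goodSet m A) : ∃ v, v ≤ m ∧ 2 * cnt A v + 1 = v := by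
  rw [goodSet] at h
  push_neg at h
  obtain ⟨v, hv, hlt⟩ := h
  obtain ⟨w, hw, he⟩ := walk_down A v (by omega)
  exact ⟨w, by omega, he⟩

lemma goodnotex {A : Finset (Fin m)} (h : goodSet m A) :
    ¬ ∃ v, v ≤ m ∧ 2 * cnt A v + 1 = v := by
  rintro ⟨v, hv, he⟩
  have := h v hv
  omega

section Count

variable {k : ℕ}

noncomputable def tau (k : ℕ) (A : Finset (Fin (4 * k))) : Finset (Fin (4 * k)) :=
  if A.card = 2 * k then
    (if H : ∃ v, v ≤ 4 * k ∧ 2 * cnt A v + 1 = v then A ∆ Fv (4 * k) (Nat.find H) else A)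
  else if H : ∃ v, v ≤ 4 * k ∧ 2 * cnt A v = v + 1 then A ∆ Fv (4 * k) (Nat.find H) else A

lemma tau_good {A : Finset (Fin (4 * k))} (hc : A.card = 2 * k) (hg : goodSet (4 * k) A) :
    tau k A = A := by
  rw [tau, if_pos hc, dif_neg (goodnotex hg)]

lemma tau_bad {A : Finset (Fin (4 * k))} (hc : A.card = 2 * k) (hg : ¬ goodSet (4 * k) A) :
    (tau k A).card = 2 * k + 1 ∧ tau k (tau k A) = A := by
  have H := badex hg
  set w := Nat.find H with hwdef
  obtain ⟨hwm, hweq⟩ : w ≤ 4 * k ∧ 2 * cnt A w + 1 = w := Nat.find_spec H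
  have htau : tau k A = A ∆ Fv (4 * k) w := by rw [tau, if_pos hc, dif_pos H]
  set B := A ∆ Fv (4 * k) w with hBdef
  have hAm : cnt A (4 * k) = 2 * k := by rw [cnt_top A (le_refl _), hc]
  have hBm : cnt B (4 * k) = B.card := cnt_top B (le_refl _)
  have hhi := cnt_symmDiff_hi A (v := 4 * k) hwm hwm
  rw [← hBdef] at hhi
  have hcard : B.card = 2 * k + 1 := by omega
  have hup : 2 * cnt B w = w + 1 := by
    have hlo := cnt_symmDiff_lo A (v := w) (le_refl _) hwm
    rw [← hBdef] at hlo
    omega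
  have H' : ∃ v, v ≤ 4 * k ∧ 2 * cnt B v = v + 1 := ⟨w, hwm, hup⟩
  have hfind' : Nat.find H' = w := by
    apply le_antisymm
    · exact Nat.find_le ⟨hwm, hup⟩
    · by_contra hlt
      push_neg at hlt
      obtain ⟨hum, hue⟩ := Nat.find_spec H'
      have hlo := cnt_symmDiff_lo A (v := Nat.find H') (by omega) hwm
      rw [← hBdef] at hlo
      exact (Nat.find_min H hlt) ⟨hum, by omega⟩
  have hBne : B.card ≠ 2 * k := by omega
  have htauB : tau k B = B ∆ Fv (4 * k) w := by
    rw [tau, if_neg hBne, dif_pos H', hfind']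
  constructor
  · rw [htau]; exact hcard
  · rw [htau, htauB, hBdef, symmDiff_symmDiff_cancel_right]

lemma tau_odd {C : Finset (Fin (4 * k))} (hc : C.card = 2 * k + 1) :
    (tau k C).card = 2 * k ∧ ¬ goodSet (4 * k) (tau k C) ∧ tau k (tau k C) = C := by
  have hCm : cnt C (4 * k) = 2 * k + 1 := by rw [cnt_top C (le_refl _), hc]
  have H : ∃ v, v ≤ 4 * k ∧ 2 * cnt C v = v + 1 := by
    obtain ⟨v, hv, he⟩ := walk_up C (4 * k) (by omega)
    exact ⟨v, hv, he⟩
  set w := Nat.find H with hwdef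
  obtain ⟨hwm, hweq⟩ : w ≤ 4 * k ∧ 2 * cnt C w = w + 1 := Nat.find_spec H
  have hCne : C.card ≠ 2 * k := by omega
  have htau : tau k C = C ∆ Fv (4 * k) w := by rw [tau, if_neg hCne, dif_pos H]
  set B := C ∆ Fv (4 * k) w with hBdef
  have hhi := cnt_symmDiff_hi C (v := 4 * k) hwm hwm
  rw [← hBdef] at hhi
  have hBm : cnt B (4 * k) = B.card := cnt_top B (le_refl _)
  have hcard : B.card = 2 * k := by omega
  have hdown : 2 * cnt B w + 1 = w := by
    have hlo := cnt_symmDiff_lo C (v := w) (le_refl _) hwm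
    rw [← hBdef] at hlo
    omega
  have hBbad : ¬ goodSet (4 * k) B := by
    intro hgood
    have := hgood w hwm
    omega
  have H' : ∃ v, v ≤ 4 * k ∧ 2 * cnt B v + 1 = v := ⟨w, hwm, hdown⟩
  have hfind' : Nat.find H' = w := by
    apply le_antisymm
    · exact Nat.find_le ⟨hwm, hdown⟩
    · by_contra hlt
      push_neg at hlt
      obtain ⟨hum, hue⟩ := Nat.find_spec H'
      have hlo := cnt_symmDiff_lo C (v := Nat.find H') (by omega) hwm
      rw [← hBdef] at hlo
      exact Nat.find_min H hlt ⟨hum, by omega⟩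
  have htauB : tau k B = B ∆ Fv (4 * k) w := by
    rw [tau, if_pos hcard, dif_pos H', hfind']
  refine ⟨?_, ?_, ?_⟩
  · rw [htau]; exact hcard
  · rw [htau]; exact hBbad
  · rw [htau, htauB, hBdef, symmDiff_symmDiff_cancel_right]


lemma choose_4k_2k (hk : 1 ≤ k) : (((4 * k).choose (2 * k) : ℕ) : ZMod 2) = 0 := by
  obtain ⟨n, hn⟩ : ∃ n, 4 * k = n + 1 := ⟨4 * k - 1, by omega⟩
  obtain ⟨j, hj⟩ : ∃ j, 2 * k = j + 1 := ⟨2 * k - 1, by omega⟩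
  have h1 : (4 * k).choose (2 * k) = n.choose j + n.choose (j + 1) := by
    rw [hn, hj, Nat.choose_succ_succ]
  have h2 : n.choose j = n.choose (j + 1) := by
    have hle : j + 1 ≤ n := by omega
    have := Nat.choose_symm hle
    have hnj : n - (j + 1) = j := by omega
    rw [hnj] at this
    exact this
  rw [h1, h2, Nat.cast_add, zmod2_add_self]

lemma choose_4k_2k1 (hk : 1 ≤ k) : (((4 * k).choose (2 * k + 1) : ℕ) : ZMod 2) = 0 := by
  obtain ⟨n, hn⟩ : ∃ n, 4 * k = n + 1 := ⟨4 * k - 1, by omega⟩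
  have h1 : (4 * k) * n.choose (2 * k) = (4 * k).choose (2 * k + 1) * (2 * k + 1) := by
    rw [hn]
    exact Nat.add_one_mul_choose_eq n (2 * k)
  have h2 : ((4 * k * n.choose (2 * k) : ℕ) : ZMod 2) = 0 := by
    rw [Nat.cast_mul]
    have h5 : ((4 * k : ℕ) : ZMod 2) = 0 := by
      have h6 : (4 * k : ℕ) = 2 * (2 * k) := by ring
      rw [h6, Nat.cast_mul]
      have h4 : ((2 : ℕ) : ZMod 2) = 0 := by decide
      rw [h4, zero_mul]
    rw [h5, zero_mul]
  have hcast : ((4 * k * n.choose (2 * k) : ℕ) : ZMod 2)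
      = (((4 * k).choose (2 * k + 1) * (2 * k + 1) : ℕ) : ZMod 2) := by rw [h1]
  rw [h2, Nat.cast_mul] at hcast
  have h3 : ((2 * k + 1 : ℕ) : ZMod 2) = 1 := by
    rw [Nat.cast_add, Nat.cast_mul, Nat.cast_one]
    have h4 : ((2 : ℕ) : ZMod 2) = 0 := by decide
    rw [h4, zero_mul, zero_add]
  rw [h3, mul_one] at hcast
  exact hcast.symm

instance goodSetDec (m : ℕ) (A : Finset (Fin m)) : Decidable (goodSet m A) :=
  decidable_of_iff (∀ v < m + 1, v ≤ 2 * cnt A v) (by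
    constructor
    · intro h v hv
      exact h v (by omega)
    · intro h v hv
      exact h v (by omega))

lemma sum_good (hk : 1 ≤ k) :
    ∑ A ∈ powersetCard (2 * k) (univ : Finset (Fin (4 * k))),
      (if goodSet (4 * k) A then (1 : ZMod 2) else 0) = 0 := by
  classical
  set P1 := powersetCard (2 * k) (univ : Finset (Fin (4 * k))) with hP1
  set P2 := powersetCard (2 * k + 1) (univ : Finset (Fin (4 * k))) with hP2
  set f : Finset (Fin (4 * k)) → ZMod 2 :=
    fun A => if A.card = 2 * k then (if goodSet (4 * k) A then 0 else 1) else 1 with hf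
  have hdisj : Disjoint P1 P2 := by
    rw [Finset.disjoint_left]
    intro A h1 h2
    rw [hP1, Finset.mem_powersetCard_univ] at h1
    rw [hP2, Finset.mem_powersetCard_univ] at h2
    omega
  have hcards : ∀ A ∈ P1 ∪ P2, A.card = 2 * k ∨ A.card = 2 * k + 1 := by
    intro A hA
    rcases Finset.mem_union.1 hA with h | h
    · exact Or.inl (Finset.mem_powersetCard_univ.1 h)
    · exact Or.inr (Finset.mem_powersetCard_univ.1 h)
  have hsum0 : ∑ A ∈ P1 ∪ P2, f A = 0 := by
    apply Finset.sum_involution (fun A _ => tau k A)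
    · intro A hA
      rcases hcards A hA with hc | hc
      · by_cases hg : goodSet (4 * k) A
        · rw [tau_good hc hg, hf]
          simp only [if_pos hc, if_pos hg, add_zero]
        · obtain ⟨hc2, _⟩ := tau_bad hc hg
          rw [hf]
          simp only [if_pos hc, if_neg hg, if_neg (show (tau k A).card ≠ 2 * k by omega)]
          exact zmod2_add_self 1
      · obtain ⟨hc2, hbad, _⟩ := tau_odd hc
        rw [hf]
        simp only [if_neg (show A.card ≠ 2 * k by omega), if_pos hc2, if_neg hbad]
        exact zmod2_add_self 1
    · intro A hA hfA
      rcases hcards A hA with hc | hc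
      · by_cases hg : goodSet (4 * k) A
        · exfalso
          apply hfA
          rw [hf]
          simp [hc, hg]
        · obtain ⟨hc2, _⟩ := tau_bad hc hg
          intro he
          rw [he] at hc2
          omega
      · obtain ⟨hc2, _, _⟩ := tau_odd hc
        intro he
        rw [he] at hc2
        omega
    · intro A hA
      rcases hcards A hA with hc | hc
      · by_cases hg : goodSet (4 * k) A
        · rw [tau_good hc hg]; exact hA
        · obtain ⟨hc2, _⟩ := tau_bad hc hg
          exact Finset.mem_union.2 (Or.inr (Finset.mem_powersetCard_univ.2 hc2))
      · obtain ⟨hc2, _, _⟩ := tau_odd hc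
        exact Finset.mem_union.2 (Or.inl (Finset.mem_powersetCard_univ.2 hc2))
    · intro A hA
      rcases hcards A hA with hc | hc
      · by_cases hg : goodSet (4 * k) A
        · rw [tau_good hc hg, tau_good hc hg]
        · exact (tau_bad hc hg).2
      · exact (tau_odd hc).2.2
  rw [Finset.sum_union hdisj] at hsum0
  have hsum2 : ∑ A ∈ P2, f A = (((4 * k).choose (2 * k + 1) : ℕ) : ZMod 2) := by
    rw [Finset.sum_congr rfl (fun A hA => ?_)]
    · rw [Finset.sum_const, hP2, Finset.card_powersetCard, Finset.card_univ, Fintype.card_fin,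
        nsmul_eq_mul, mul_one]
    · rw [hf]
      have hc := Finset.mem_powersetCard_univ.1 hA
      simp only [hc]
      rw [if_neg (by omega)]
  have hsum1 : ∑ A ∈ P1, f A = ∑ A ∈ P1, (if goodSet (4 * k) A then (0 : ZMod 2) else 1) := by
    apply Finset.sum_congr rfl
    intro A hA
    have hc := Finset.mem_powersetCard_univ.1 hA
    rw [hf]
    simp only [hc, if_pos]
  have key : ∑ A ∈ P1, (if goodSet (4 * k) A then (0 : ZMod 2) else 1) = 0 := by
    rw [← hsum1]
    rw [hsum2, choose_4k_2k1 hk, add_zero] at hsum0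
    exact hsum0
  have hpoint : ∀ A, (if goodSet (4 * k) A then (1 : ZMod 2) else 0)
      = 1 + (if goodSet (4 * k) A then (0 : ZMod 2) else 1) := by
    intro A
    by_cases hg : goodSet (4 * k) A
    · simp [hg]
    · simp only [if_neg hg]
      rw [← zmod2_add_self 1]
  rw [Finset.sum_congr rfl (fun A _ => hpoint A), Finset.sum_add_distrib, key, add_zero,
    Finset.sum_const, hP1, Finset.card_powersetCard, Finset.card_univ, Fintype.card_fin,
    nsmul_eq_mul, mul_one]
  exact choose_4k_2k hk


/-! ### Final assembly -/

noncomputable def eA (A : Finset (Fin m)) : Fin m →₀ ℕ := ∑ i ∈ A, Finsupp.single i 1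

lemma pre_zero (v : ℕ) : pre (0 : Fin m →₀ ℕ) v = 0 := by simp [pre]

lemma deg_zero : deg (0 : Fin m →₀ ℕ) = 0 := by simp [deg]

lemma pre_finset_sum {ι : Type*} (s : Finset ι) (f : ι → (Fin m →₀ ℕ)) (v : ℕ) :
    pre (∑ i ∈ s, f i) v = ∑ i ∈ s, pre (f i) v := by
  classical
  induction s using Finset.cons_induction with
  | empty => simp [pre_zero]
  | cons a s' ha ih => rw [Finset.sum_cons, pre_add, ih, Finset.sum_cons]

lemma deg_finset_sum {ι : Type*} (s : Finset ι) (f : ι → (Fin m →₀ ℕ)) :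
    deg (∑ i ∈ s, f i) = ∑ i ∈ s, deg (f i) := by
  classical
  induction s using Finset.cons_induction with
  | empty => simp [deg_zero]
  | cons a s' ha ih => rw [Finset.sum_cons, deg_add, ih, Finset.sum_cons]

lemma pre_eA (A : Finset (Fin m)) (v : ℕ) : pre (eA A) v = cnt A v := by
  classical
  rw [eA, pre_finset_sum]
  rw [Finset.sum_congr rfl (fun i _ => pre_single i 1 v)]
  rw [Finset.sum_ite, Finset.sum_const, Finset.sum_const]
  simp [cnt]

lemma deg_eA (A : Finset (Fin m)) : deg (eA A) = A.card := by
  classical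
  rw [eA, deg_finset_sum]
  rw [Finset.sum_congr rfl (fun i _ => deg_single i 1)]
  simp

lemma lam_full : lam (full m) = 1 := by
  classical
  have h1 : full m = monomial (eA (univ : Finset (Fin m))) 1 := by
    rw [eA, monomial_sum_one, full]
    apply Finset.prod_congr rfl
    intro i _
    rw [X_as_monomial]
  rw [h1, lam_monomial, if_pos]
  constructor
  · rw [deg_eA, Finset.card_univ, Fintype.card_fin]
  · intro v hv
    rw [pre_eA]
    have : cnt (univ : Finset (Fin m)) v = v := by
      rw [cnt]
      have : (univ.filter fun i : Fin m => (i : ℕ) < v) = Fv m v := rfl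
      rw [this, card_Fv hv]
    omega

lemma MM_double (A : Finset (Fin m)) :
    MM (A.val + A.val) = monomial (eA A + eA A) 1 := by
  classical
  have h1 : MM (A.val + A.val) = (∏ i ∈ A, (X i : PP m)) * (∏ i ∈ A, (X i : PP m)) := by
    rw [MM, Multiset.map_add, Multiset.prod_add]
    rfl
  have h2 : (∏ i ∈ A, (X i : PP m)) = monomial (eA A) 1 := by
    rw [eA, monomial_sum_one]
    apply Finset.prod_congr rfl
    intro i _
    rw [X_as_monomial]
  rw [h1, h2, monomial_mul, mul_one]

lemma good_double {k : ℕ} {A : Finset (Fin (4 * k))} (hc : A.card = 2 * k) :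
    Good (4 * k) (eA A + eA A) ↔ goodSet (4 * k) A := by
  constructor
  · rintro ⟨_, hp⟩ v hv
    have := hp v hv
    rw [pre_add, pre_eA] at this
    omega
  · intro hg
    constructor
    · rw [deg_add, deg_eA, hc]; ring
    · intro v hv
      have := hg v hv
      rw [pre_add, pre_eA]
      omega

theorem main (k : ℕ) (hk : 1 ≤ k) :
    esymm (Fin (4 * k)) (ZMod 2) (2 * k) ^ 2 ∈ lsIdeal (4 * k) := by
  classical
  have hchar : esymm (Fin (4 * k)) (ZMod 2) (2 * k) ^ 2
      = ∑ A ∈ powersetCard (2 * k) (univ : Finset (Fin (4 * k))),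
          monomial (eA A + eA A) (1 : ZMod 2) := by
    rw [esymm_eq_sum_monomial, sum_pow_char]
    apply Finset.sum_congr rfl
    intro A _
    rw [sq, monomial_mul, mul_one]
    rfl
  set c : Finset (Fin (4 * k)) → ZMod 2 :=
    fun A => if monomial (eA A + eA A) (1 : ZMod 2) ∈ lsIdeal (4 * k) then 0 else 1 with hcdef
  have hterm : ∀ A ∈ powersetCard (2 * k) (univ : Finset (Fin (4 * k))),
      monomial (eA A + eA A) (1 : ZMod 2) + c A • full (4 * k) ∈ lsIdeal (4 * k) := by
    intro A hA
    have hcA := Finset.mem_powersetCard_univ.1 hA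
    have hcard : (A.val + A.val).card = 4 * k := by
      rw [Multiset.card_add]
      have : A.val.card = 2 * k := hcA
      omega
    have heng := engine (weight (A.val + A.val)) (A.val + A.val) (le_refl _) hcard
    rw [MM_double] at heng
    by_cases hmem : monomial (eA A + eA A) (1 : ZMod 2) ∈ lsIdeal (4 * k)
    · rw [hcdef]
      simp only [if_pos hmem, zero_smul, add_zero]
      exact hmem
    · rcases heng with h | h
      · exact absurd h hmem
      · rw [hcdef]
        simp only [if_neg hmem, one_smul]
        exact h
  have hmem : esymm (Fin (4 * k)) (ZMod 2) (2 * k) ^ 2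
      + (∑ A ∈ powersetCard (2 * k) (univ : Finset (Fin (4 * k))), c A) • full (4 * k)
      ∈ lsIdeal (4 * k) := by
    rw [hchar, Finset.sum_smul, ← Finset.sum_add_distrib]
    exact Ideal.sum_mem _ hterm
  have hlam := lam_ideal hmem
  rw [lam_add, lam_smul, lam_full, mul_one] at hlam
  have hlamsq : lam (esymm (Fin (4 * k)) (ZMod 2) (2 * k) ^ 2) = 0 := by
    rw [hchar, lam_sum]
    have hco : ∀ A ∈ powersetCard (2 * k) (univ : Finset (Fin (4 * k))),
        lam (monomial (eA A + eA A) (1 : ZMod 2))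
          = (if goodSet (4 * k) A then (1 : ZMod 2) else 0) := by
      intro A hA
      have hcA := Finset.mem_powersetCard_univ.1 hA
      rw [lam_monomial]
      by_cases hg : goodSet (4 * k) A
      · rw [if_pos ((good_double hcA).2 hg), if_pos hg]
      · rw [if_neg (fun h => hg ((good_double hcA).1 h)), if_neg hg]
    rw [Finset.sum_congr rfl hco]
    exact sum_good hk
  rw [hlamsq, zero_add] at hlam
  rw [hlam, zero_smul, add_zero] at hmem
  exact hmem

end Count

end Stmt10

/-- For every `k ≥ 1`, the image of `σ_{2k}(x₁,…,x_{4k})²` in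
`F₂[x₁,…,x_{4k}]/I(4k+1)` is zero; equivalently `σ_{2k}² ∈ I(4k+1)`.  (Here the number of
variables is `(4k+1) − 1 = 4k`.) -/
theorem stmt10 (k : ℕ) (hk : 1 ≤ k) :
    esymm (Fin (4 * k)) (ZMod 2) (2 * k) ^ 2 ∈ lsIdeal (4 * k) := by
  exact Stmt10.main k hk
end

section
/- For all integers r, s ≥ 0, setting k = 2^r + 2^s − 1, the image of σ_{2k}(x₁,…,x_{4k+1})² in the quotient ring F₂[x₁,…,x_{4k+1}]/I(4k+2) is nonzero. -/
open MvPolynomial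

namespace LS

open Finset List DyckStep

attribute [local instance] Classical.propDecidable

/-! ### The carry process -/

def car (E : ℕ → ℕ) : ℕ → ℕ
  | 0 => 0
  | i + 1 => E i + car E i - 1

def bit (E : ℕ → ℕ) (i : ℕ) : ℕ := min (E i + car E i) 1

lemma car_succ (E : ℕ → ℕ) (i : ℕ) : car E (i+1) = E i + car E i - 1 := rfl

lemma car_congr {E F : ℕ → ℕ} (t : ℕ) (h : ∀ n < t, E n = F n) : car E t = car F t := by
  induction t with
  | zero => rfl
  | succ t ih =>
    rw [car_succ, car_succ, h t (by omega), ih (fun n hn => h n (by omega))]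

lemma exchange (E : ℕ → ℕ) (i : ℕ) :
    (∀ t, (t ≤ i ∨ i + 2 ≤ t) →
      car (fun n => E n + (if n = i then 2 else 0)) t
        = car (fun n => E n + ((if n = i then 1 else 0) + (if n = i + 1 then 1 else 0))) t) ∧
    (∀ n, bit (fun n => E n + (if n = i then 2 else 0)) n
        = bit (fun n => E n + ((if n = i then 1 else 0) + (if n = i + 1 then 1 else 0))) n) := by
  set E1 := fun n => E n + (if n = i then 2 else 0) with hE1
  set E2 := fun n => E n + ((if n = i then 1 else 0) + (if n = i + 1 then 1 else 0)) with hE2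
  have hlow : ∀ t, t ≤ i → car E1 t = car E2 t := by
    intro t ht
    apply car_congr
    intro n hn
    simp only [hE1, hE2]
    have h1 : n ≠ i := by omega
    have h2 : n ≠ i + 1 := by omega
    simp [h1, h2]
  have hi1 : car E1 (i+1) = E i + car E2 i + 1 ∧ car E2 (i+1) = E i + car E2 i := by
    rw [car_succ, car_succ, hlow i le_rfl]
    constructor
    · simp only [hE1]; simp; omega
    · simp only [hE2]; simp
  have hi2 : car E1 (i+2) = car E2 (i+2) := by
    rw [car_succ (E := E1), car_succ (E := E2), hi1.1, hi1.2]
    simp only [hE1, hE2]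
    have h1 : i + 1 ≠ i := by omega
    simp [h1]
    try omega
  have hhigh : ∀ t, i + 2 ≤ t → car E1 t = car E2 t := by
    intro t ht
    induction t with
    | zero => omega
    | succ t ih =>
      rcases Nat.lt_or_ge (i+2) (t+1) with h | h
      · rw [car_succ, car_succ, ih (by omega)]
        have h1 : t ≠ i := by omega
        have h2 : t ≠ i + 1 := by omega
        simp only [hE1, hE2]; simp [h1, h2]
      · have : t + 1 = i + 2 := by omega
        rw [this]; exact hi2
  refine ⟨fun t ht => ht.elim (hlow t) (hhigh t), fun n => ?_⟩
  unfold bit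
  rcases Nat.lt_trichotomy n i with h | h | h
  · rw [hlow n (by omega)]
    have h1 : n ≠ i := by omega
    have h2 : n ≠ i + 1 := by omega
    simp only [hE1, hE2]; simp [h1, h2]
  · subst h
    rw [hlow n le_rfl]
    simp only [hE1, hE2]
    have h2 : n ≠ n + 1 := by omega
    simp [h2]
    omega
  · rcases Nat.eq_or_lt_of_le h with h' | h'
    · subst h'
      rw [hi1.1, hi1.2]
      simp only [hE1, hE2]
      have h1 : i + 1 ≠ i := by omega
      simp [h1]
      try omega
    · rw [hhigh n (by omega)]
      have h1 : n ≠ i := by omega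
      have h2 : n ≠ i + 1 := by omega
      simp only [hE1, hE2]; simp [h1, h2]

/-! ### goodness and block analysis -/

def goodE (m p0 : ℕ) (E : ℕ → ℕ) : Prop :=
  car E m = 0 ∧ ∀ i < m, bit E i = (if i = p0 then 0 else 1)

lemma bit_eq_one_iff (E : ℕ → ℕ) (i : ℕ) : bit E i = 1 ↔ 1 ≤ E i + car E i := by
  unfold bit; omega

lemma bit_eq_zero_iff (E : ℕ → ℕ) (i : ℕ) : bit E i = 0 ↔ E i + car E i = 0 := by
  unfold bit; omega

lemma blockA (E : ℕ → ℕ) (t0 L : ℕ) (h0 : car E t0 = 0)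
    (hb : ∀ i < L, bit E (t0 + i) = 1) :
    ∀ t ≤ L, car E (t0 + t) + t = ∑ j ∈ Finset.range t, E (t0 + j) := by
  intro t ht
  induction t with
  | zero => simpa using h0
  | succ t ih =>
    have h1 := ih (by omega)
    have h2 := (bit_eq_one_iff E (t0 + t)).mp (hb t (by omega))
    have h3 : car E (t0 + t + 1) = E (t0 + t) + car E (t0 + t) - 1 := car_succ ..
    rw [Finset.sum_range_succ, ← h1]
    have : t0 + (t + 1) = t0 + t + 1 := by omega
    rw [this]
    omega

lemma blockB (E : ℕ → ℕ) (t0 L : ℕ) (h0 : car E t0 = 0)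
    (hF : ∀ t ≤ L, t ≤ ∑ j ∈ Finset.range t, E (t0 + j)) :
    (∀ i < L, bit E (t0 + i) = 1) ∧
    (∀ t ≤ L, car E (t0 + t) + t = ∑ j ∈ Finset.range t, E (t0 + j)) := by
  have main : ∀ t, t ≤ L →
      (car E (t0 + t) + t = ∑ j ∈ Finset.range t, E (t0 + j)) ∧
      (∀ i < t, bit E (t0 + i) = 1) := by
    intro t ht
    induction t with
    | zero => exact ⟨by simpa using h0, by omega⟩
    | succ t ih =>
      obtain ⟨hcar, hbits⟩ := ih (by omega)
      have hs : ∑ j ∈ Finset.range (t+1), E (t0 + j)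
          = (∑ j ∈ Finset.range t, E (t0 + j)) + E (t0 + t) := Finset.sum_range_succ ..
      have hF1 := hF (t+1) ht
      have hbit : bit E (t0 + t) = 1 := by
        rw [bit_eq_one_iff]
        omega
      have h3 : car E (t0 + t + 1) = E (t0 + t) + car E (t0 + t) - 1 := car_succ ..
      have h4 : t0 + (t + 1) = t0 + t + 1 := by omega
      refine ⟨?_, ?_⟩
      · rw [h4, hs]
        have := (bit_eq_one_iff E (t0 + t)).mp hbit
        omega
      · intro i hi
        rcases Nat.lt_or_ge i t with h | h
        · exact hbits i h
        · have : i = t := by omega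
          rw [this]; exact hbit
  exact ⟨fun i hi => (main L le_rfl).2 i hi, fun t ht => (main t ht).1⟩

lemma goodE_iff (a b : ℕ) (E : ℕ → ℕ) :
    goodE (2*a+1+2*b) (2*a) E ↔
      ((∀ t ≤ 2*a, t ≤ ∑ j ∈ Finset.range t, E j) ∧
       (∑ j ∈ Finset.range (2*a), E j) = 2*a ∧
       E (2*a) = 0 ∧
       (∀ t ≤ 2*b, t ≤ ∑ j ∈ Finset.range t, E (2*a+1+j)) ∧
       (∑ j ∈ Finset.range (2*b), E (2*a+1+j)) = 2*b) := by
  constructor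
  · rintro ⟨hc, hb⟩
    have hb1 : ∀ i < 2*a, bit E i = 1 := by
      intro i hi
      have := hb i (by omega)
      rwa [if_neg (by omega)] at this
    have hA := blockA E 0 (2*a) rfl (by simpa using hb1)
    simp only [Nat.zero_add] at hA
    have hpre1 : ∀ t ≤ 2*a, t ≤ ∑ j ∈ Finset.range t, E j := by
      intro t ht; have := hA t ht; omega
    have hbp : bit E (2*a) = 0 := by
      have := hb (2*a) (by omega)
      rwa [if_pos rfl] at this
    have hz := (bit_eq_zero_iff E (2*a)).mp hbp
    have hcar2a : car E (2*a) + 2*a = ∑ j ∈ Finset.range (2*a), E j := hA (2*a) le_rfl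
    have hE2a : E (2*a) = 0 := by omega
    have hcar2a0 : car E (2*a) = 0 := by omega
    have hcar2a1 : car E (2*a+1) = 0 := by
      rw [car_succ]; omega
    have hb2 : ∀ i < 2*b, bit E (2*a+1+i) = 1 := by
      intro i hi
      have := hb (2*a+1+i) (by omega)
      rwa [if_neg (by omega)] at this
    have hB := blockA E (2*a+1) (2*b) hcar2a1 hb2
    have hpre2 : ∀ t ≤ 2*b, t ≤ ∑ j ∈ Finset.range t, E (2*a+1+j) := by
      intro t ht; have := hB t ht; omega
    have hcm : car E (2*a+1+2*b) = 0 := hc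
    have := hB (2*b) le_rfl
    refine ⟨hpre1, by omega, hE2a, hpre2, by omega⟩
  · rintro ⟨hpre1, hsum1, hE2a, hpre2, hsum2⟩
    obtain ⟨hbits1, hcar1⟩ := blockB E 0 (2*a) rfl (by simpa using hpre1)
    simp only [Nat.zero_add] at hbits1 hcar1
    have hcar2a : car E (2*a) = 0 := by
      have := hcar1 (2*a) le_rfl; omega
    have hbit2a : bit E (2*a) = 0 := by
      rw [bit_eq_zero_iff]; omega
    have hcar2a1 : car E (2*a+1) = 0 := by rw [car_succ]; omega
    obtain ⟨hbits2, hcar2⟩ := blockB E (2*a+1) (2*b) hcar2a1 hpre2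
    constructor
    · have := hcar2 (2*b) le_rfl; omega
    · intro i hi
      rcases Nat.lt_trichotomy i (2*a) with h | h | h
      · rw [if_neg (by omega)]; exact hbits1 i h
      · rw [if_pos h, h]; exact hbit2a
      · rw [if_neg (by omega)]
        have h2 : i = 2*a+1+(i - (2*a+1)) := by omega
        rw [h2]
        exact hbits2 _ (by omega)

/-! ### the functional -/

def toE (m : ℕ) (d : Fin m →₀ ℕ) : ℕ → ℕ := fun n => if h : n < m then d ⟨n, h⟩ else 0

def Pd (m p0 : ℕ) (d : Fin m →₀ ℕ) : Prop := goodE m p0 (toE m d)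

noncomputable def lam (m p0 : ℕ) : MvPolynomial (Fin m) (ZMod 2) →+ ZMod 2 :=
  AddMonoidHom.mk' (fun f => (AddMonoidAlgebra.coeff f).sum fun d c => if Pd m p0 d then c else 0) (by
    intro f g
    apply Finsupp.sum_add_index'
    · intro d; simp
    · intro d c1 c2; split <;> simp)

lemma lam_monomial (m p0 : ℕ) (d : Fin m →₀ ℕ) (c : ZMod 2) :
    lam m p0 (monomial d c) = if Pd m p0 d then c else 0 := by
  have h0 : lam m p0 (monomial d c)
      = Finsupp.sum (Finsupp.single d c) (fun d c => if Pd m p0 d then c else 0) := rfl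
  rw [h0, Finsupp.sum_single_index (by simp)]

lemma toE_add_single (m : ℕ) (d : Fin m →₀ ℕ) (i : Fin m) (v : ℕ) :
    toE m (d + Finsupp.single i v) = fun n => toE m d n + (if n = (i : ℕ) then v else 0) := by
  funext n
  unfold toE
  by_cases h : n < m
  · simp only [dif_pos h, Finsupp.add_apply, Finsupp.single_apply]
    congr 1
    have : (i = (⟨n, h⟩ : Fin m)) ↔ n = (i : ℕ) := by
      rw [Fin.ext_iff]; simp [eq_comm]
    split <;> split <;> first | rfl | (exfalso; omega)
  · have h1 : n ≠ (i : ℕ) := by have := i.isLt; omega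
    simp [dif_neg h, h1]

lemma lam_mul_gen (m p0 : ℕ) (q : MvPolynomial (Fin m) (ZMod 2))
    (hq : q ∈ ({q | ∃ i j : Fin m, (j : ℕ) = (i : ℕ) + 1 ∧ q = X i ^ 2 + X i * X j} ∪
     {q | ∃ i : Fin m, (i : ℕ) = m - 1 ∧ q = X i ^ 2} : Set (MvPolynomial (Fin m) (ZMod 2))))
    (f : MvPolynomial (Fin m) (ZMod 2)) : lam m p0 (f * q) = 0 := by
  conv_lhs => rw [← support_sum_monomial_coeff f, Finset.sum_mul, map_sum]
  rw [Finset.sum_eq_zero]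
  intro d _
  set c := coeff d f
  rcases hq with ⟨i, j, hj, rfl⟩ | ⟨i, hi, rfl⟩
  · have expand : monomial d c * (X i ^ 2 + X i * X j)
        = monomial (d + Finsupp.single i 2) c
          + monomial ((d + Finsupp.single i 1) + Finsupp.single j 1) c := by
      rw [mul_add, X_pow_eq_monomial, monomial_mul, mul_one, X, X, monomial_mul, monomial_mul,
        mul_one, mul_one, add_assoc]
    rw [expand, map_add, lam_monomial, lam_monomial]
    have hEq : Pd m p0 (d + Finsupp.single i 2) ↔
        Pd m p0 ((d + Finsupp.single i 1) + Finsupp.single j 1) := by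
      have e1 : toE m (d + Finsupp.single i 2)
          = fun n => toE m d n + (if n = (i : ℕ) then 2 else 0) := toE_add_single ..
      have e2 : toE m ((d + Finsupp.single i 1) + Finsupp.single j 1)
          = fun n => toE m d n + ((if n = (i : ℕ) then 1 else 0) +
              (if n = (i : ℕ) + 1 then 1 else 0)) := by
        rw [toE_add_single, toE_add_single]
        funext n
        rw [hj]
        ring
      unfold Pd goodE
      rw [e1, e2]
      obtain ⟨hc, hb⟩ := exchange (toE m d) (i : ℕ)
      have hm : (i : ℕ) + 2 ≤ m := by have := j.isLt; omega
      rw [hc m (Or.inr hm)]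
      simp only [hb]
    by_cases h : Pd m p0 (d + Finsupp.single i 2)
    · rw [if_pos h, if_pos (hEq.mp h), CharTwo.add_self_eq_zero]
    · rw [if_neg h, if_neg (fun hh => h (hEq.mpr hh)), add_zero]
  · rw [X_pow_eq_monomial, monomial_mul, mul_one, lam_monomial, if_neg]
    intro hP
    obtain ⟨hcar, -⟩ := hP
    generalize hE : toE m (d + Finsupp.single i 2) = E at hcar
    have hE2 : 2 ≤ E (i : ℕ) := by rw [← hE, toE_add_single]; simp
    have hm : m = (i : ℕ) + 1 := by have := i.isLt; omega
    rw [hm, car_succ] at hcar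
    omega

lemma lam_vanish (m p0 : ℕ) (p : MvPolynomial (Fin m) (ZMod 2)) (hp : p ∈ lsIdeal m) :
    lam m p0 p = 0 := by
  have key : ∀ f, lam m p0 (f * p) = 0 := by
    refine Submodule.span_induction (p := fun p _ => ∀ f, lam m p0 (f * p) = 0)
      ?_ ?_ ?_ ?_ hp
    · intro q hq f; exact lam_mul_gen m p0 q hq f
    · intro f; rw [mul_zero, map_zero]
    · intro x y _ _ hx hy f; rw [mul_add, map_add, hx, hy, add_zero]
    · intro a x _ hx f
      rw [smul_eq_mul, ← mul_assoc]
      exact hx (f * a)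
  simpa using key 1

/-! ### exponent vectors of squared squarefree monomials -/

def ES (m : ℕ) (S : Finset (Fin m)) : ℕ → ℕ :=
  fun n => if h : n < m then (if (⟨n, h⟩ : Fin m) ∈ S then 2 else 0) else 0

def cnt (m : ℕ) (S : Finset (Fin m)) (t : ℕ) : ℕ :=
  ∑ x ∈ S, (if (x : ℕ) < t then 1 else 0)

lemma ES_val (m : ℕ) (S : Finset (Fin m)) (n : ℕ) (h : n < m) :
    ES m S n = if (⟨n, h⟩ : Fin m) ∈ S then 2 else 0 := by
  unfold ES; rw [dif_pos h]

lemma sum_ES (m : ℕ) (S : Finset (Fin m)) (t0 t : ℕ) (h : t0 + t ≤ m) :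
    ∑ j ∈ Finset.range t, ES m S (t0 + j)
      = 2 * ∑ x ∈ S, (if t0 ≤ (x : ℕ) ∧ (x : ℕ) < t0 + t then 1 else 0) := by
  induction t with
  | zero =>
    simp only [Finset.range_zero, Finset.sum_empty, Nat.add_zero]
    rw [Finset.sum_eq_zero (fun x _ => by rw [if_neg (by omega)]), Nat.mul_zero]
  | succ t ih =>
    rw [Finset.sum_range_succ, ih (by omega)]
    have hm : t0 + t < m := by omega
    have hES : ES m S (t0 + t) = (if (⟨t0 + t, hm⟩ : Fin m) ∈ S then 2 else 0) := by
      unfold ES; rw [dif_pos hm]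
    have hsplit : ∀ x : Fin m,
        (if t0 ≤ (x : ℕ) ∧ (x : ℕ) < t0 + (t+1) then (1:ℕ) else 0)
          = (if t0 ≤ (x : ℕ) ∧ (x : ℕ) < t0 + t then 1 else 0)
            + (if x = (⟨t0 + t, hm⟩ : Fin m) then 1 else 0) := by
      intro x
      have : (x = (⟨t0 + t, hm⟩ : Fin m)) ↔ (x : ℕ) = t0 + t := by
        rw [Fin.ext_iff]
      by_cases hx : (x : ℕ) = t0 + t
      · rw [if_pos (this.mpr hx), if_pos (by omega), if_neg (by omega)]
      · rw [if_neg (fun hh => hx (this.mp hh))]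
        by_cases h1 : t0 ≤ (x : ℕ) ∧ (x : ℕ) < t0 + t
        · rw [if_pos h1, if_pos ⟨h1.1, by omega⟩]
        · rw [if_neg h1, if_neg (by omega)]
    rw [Finset.sum_congr rfl (fun x _ => hsplit x), Finset.sum_add_distrib,
      Finset.sum_ite_eq' S _ (fun _ => (1:ℕ)), hES]
    by_cases hmem : (⟨t0 + t, hm⟩ : Fin m) ∈ S
    · rw [if_pos hmem, if_pos hmem]; ring
    · rw [if_neg hmem, if_neg hmem]; ring

lemma cnt_all (m : ℕ) (S : Finset (Fin m)) : cnt m S m = S.card := by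
  unfold cnt
  rw [Finset.sum_congr rfl (fun x _ => if_pos x.isLt), Finset.sum_const, smul_eq_mul, mul_one]

lemma cnt_ES (m : ℕ) (S : Finset (Fin m)) (t : ℕ) (ht : t ≤ m) :
    ∑ j ∈ Finset.range t, ES m S j = 2 * cnt m S t := by
  have := sum_ES m S 0 t (by omega)
  simp only [Nat.zero_add] at this
  rw [this]
  unfold cnt
  congr 1
  exact Finset.sum_congr rfl fun x _ => by
    by_cases h : (x:ℕ) < t
    · rw [if_pos ⟨Nat.zero_le _, h⟩, if_pos h]
    · rw [if_neg (by omega), if_neg h]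

/-! ### Dyck subsets -/

def dy (n : ℕ) (T : Finset (Fin (2*n))) : Prop :=
  (∀ t ≤ 2*n, t ≤ 2 * cnt (2*n) T t) ∧ T.card = n

lemma count_take_ofFn (N : ℕ) (f : Fin N → DyckStep) (c : DyckStep) (t : ℕ) (ht : t ≤ N) :
    ((List.ofFn f).take t).count c
      = ∑ x : Fin N, (if f x = c ∧ (x : ℕ) < t then 1 else 0) := by
  induction t with
  | zero => simp
  | succ t ih =>
    have htN : t < N := by omega
    rw [List.take_succ, List.count_append, ih (by omega),
      List.getElem?_eq_getElem (by simpa using htN), List.getElem_ofFn]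
    have hsingle : ∀ y : DyckStep, ((Option.some y).toList).count c
        = if y = c then 1 else 0 := by
      intro y; simp [List.count_singleton']
    rw [hsingle]
    have hsplit : ∀ x : Fin N,
        (if f x = c ∧ (x : ℕ) < t + 1 then (1:ℕ) else 0)
          = (if f x = c ∧ (x : ℕ) < t then 1 else 0)
            + (if x = (⟨t, htN⟩ : Fin N) then (if f x = c then 1 else 0) else 0) := by
      intro x
      have hxt : (x = (⟨t, htN⟩ : Fin N)) ↔ (x : ℕ) = t := by rw [Fin.ext_iff]
      by_cases h1 : (x : ℕ) = t
      · rw [if_pos (hxt.mpr h1)]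
        by_cases h2 : f x = c
        · rw [if_pos ⟨h2, by omega⟩, if_neg (by omega), if_pos h2]
        · rw [if_neg (by tauto), if_neg (by tauto), if_neg h2]
      · rw [if_neg (fun hh => h1 (hxt.mp hh)), add_zero]
        by_cases h2 : f x = c ∧ (x : ℕ) < t
        · rw [if_pos h2, if_pos ⟨h2.1, by omega⟩]
        · rw [if_neg h2, if_neg (fun hh => h2 ⟨hh.1, by omega⟩)]
    rw [Finset.sum_congr rfl (fun x _ => hsplit x), Finset.sum_add_distrib,
      Finset.sum_ite_eq' Finset.univ (⟨t, htN⟩ : Fin N)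
        (fun x => if f x = c then (1:ℕ) else 0), if_pos (Finset.mem_univ _)]

lemma count_U_add_count_D (l : List DyckStep) : l.count U + l.count D = l.length := by
  induction l with
  | nil => simp
  | cons a l ih =>
    cases a <;> simp [List.count_cons] <;> omega

def wordOf (n : ℕ) (T : Finset (Fin (2*n))) : List DyckStep :=
  List.ofFn (fun i => if i ∈ T then U else D)

lemma length_wordOf (n : ℕ) (T : Finset (Fin (2*n))) : (wordOf n T).length = 2*n := by
  simp [wordOf]

lemma countU_take_wordOf (n : ℕ) (T : Finset (Fin (2*n))) (t : ℕ) (ht : t ≤ 2*n) :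
    ((wordOf n T).take t).count U = cnt (2*n) T t := by
  rw [wordOf, count_take_ofFn _ _ _ t ht]
  unfold cnt
  rw [show (∑ x ∈ T, (if (x:ℕ) < t then (1:ℕ) else 0))
      = ∑ x ∈ Finset.univ ∩ T, (if (x:ℕ) < t then (1:ℕ) else 0) by rw [Finset.univ_inter],
    ← Finset.sum_ite_mem]
  apply Finset.sum_congr rfl
  intro x _
  by_cases h : x ∈ T
  · simp [h]
  · simp [h]

lemma countD_take_wordOf (n : ℕ) (T : Finset (Fin (2*n))) (t : ℕ) (ht : t ≤ 2*n) :
    ((wordOf n T).take t).count D = t - cnt (2*n) T t := by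
  have h1 := count_U_add_count_D ((wordOf n T).take t)
  rw [List.length_take, length_wordOf] at h1
  rw [countU_take_wordOf n T t ht] at h1
  omega

def dyWord (n : ℕ) (T : Finset (Fin (2*n))) (h : dy n T) : DyckWord where
  toList := wordOf n T
  count_U_eq_count_D := by
    have hU : (wordOf n T).count U = n := by
      have h0 := countU_take_wordOf n T (2*n) le_rfl
      rw [List.take_of_length_le (le_of_eq (length_wordOf n T))] at h0
      rw [h0, cnt_all]
      exact h.2
    have := count_U_add_count_D (wordOf n T)
    rw [length_wordOf] at this
    omega
  count_D_le_count_U := by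
    intro i
    rcases le_or_gt i (2*n) with hi | hi
    · rw [countU_take_wordOf n T i hi, countD_take_wordOf n T i hi]
      have := h.1 i hi
      omega
    · have hfull : (wordOf n T).take i = (wordOf n T).take (2*n) := by
        rw [List.take_of_length_le (by rw [length_wordOf]; omega),
          List.take_of_length_le (le_of_eq (length_wordOf n T))]
      rw [hfull, countU_take_wordOf n T _ le_rfl, countD_take_wordOf n T _ le_rfl, cnt_all, h.2]
      omega

lemma semilength_dyWord (n : ℕ) (T : Finset (Fin (2*n))) (h : dy n T) :
    (dyWord n T h).semilength = n := by
  show (wordOf n T).count U = n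
  have h0 := countU_take_wordOf n T (2*n) le_rfl
  rw [List.take_of_length_le (le_of_eq (length_wordOf n T))] at h0
  rw [h0, cnt_all]
  exact h.2

def setOf' (n : ℕ) (w : DyckWord) : Finset (Fin (2*n)) :=
  Finset.univ.filter (fun i => w.toList.getD (i:ℕ) D = U)

lemma wordOf_setOf' (n : ℕ) (w : DyckWord) (hw : w.semilength = n) :
    wordOf n (setOf' n w) = w.toList := by
  have hl : w.toList.length = 2*n := by
    rw [← w.two_mul_semilength_eq_length, hw]
  apply List.ext_getElem (by simp [wordOf, hl])
  intro i h1 h2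
  simp only [wordOf]
  rw [List.getElem_ofFn]
  simp only [setOf', Finset.mem_filter, Finset.mem_univ, true_and]
  have hg : w.toList.getD (i:ℕ) D = w.toList[i] := List.getD_eq_getElem _ _ h2
  rcases (w.toList[i]).dichotomy with hv | hv
  · rw [if_pos (by rw [hg, hv]), hv]
  · rw [if_neg (by rw [hg, hv]; decide), hv]

lemma dy_setOf' (n : ℕ) (w : DyckWord) (hw : w.semilength = n) : dy n (setOf' n w) := by
  have hkey := wordOf_setOf' n w hw
  have hcnt : ∀ t ≤ 2*n, cnt (2*n) (setOf' n w) t = (w.toList.take t).count U := by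
    intro t ht
    rw [← countU_take_wordOf n _ t ht, hkey]
  constructor
  · intro t ht
    have h1 := w.count_D_le_count_U t
    have h2 := count_U_add_count_D (w.toList.take t)
    have hl : w.toList.length = 2*n := by rw [← w.two_mul_semilength_eq_length, hw]
    rw [List.length_take, hl] at h2
    rw [hcnt t ht]
    omega
  · have hl : w.toList.length = 2*n := by
      rw [← w.two_mul_semilength_eq_length, hw]
    have hfull : w.toList.take (2*n) = w.toList := List.take_of_length_le (le_of_eq hl)
    rw [← cnt_all, hcnt (2*n) le_rfl, hfull, ← hw]
    rfl

def dyEquiv (n : ℕ) : {T : Finset (Fin (2*n)) // dy n T} ≃ {w : DyckWord // w.semilength = n} where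
  toFun T := ⟨dyWord n T.1 T.2, semilength_dyWord n T.1 T.2⟩
  invFun w := ⟨setOf' n w.1, dy_setOf' n w.1 w.2⟩
  left_inv := by
    rintro ⟨T, hT⟩
    apply Subtype.ext
    show setOf' n (dyWord n T hT) = T
    ext i
    simp only [setOf', Finset.mem_filter, Finset.mem_univ, true_and]
    show (wordOf n T).getD (i:ℕ) D = U ↔ i ∈ T
    have hg : (wordOf n T).getD (i:ℕ) D
        = (wordOf n T)[(i:ℕ)]'(by rw [length_wordOf]; exact i.isLt) :=
      List.getD_eq_getElem _ _ (by rw [length_wordOf]; exact i.isLt)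
    simp only [wordOf] at hg ⊢
    rw [hg, List.getElem_ofFn]
    by_cases h : i ∈ T
    · simp [h]
    · simp [h]
  right_inv := by
    rintro ⟨w, hw⟩
    apply Subtype.ext
    apply DyckWord.ext
    show (wordOf n (setOf' n w)) = w.toList
    exact wordOf_setOf' n w hw

lemma card_dy (n : ℕ) : Fintype.card {T : Finset (Fin (2*n)) // dy n T} = catalan n := by
  rw [Fintype.card_congr (dyEquiv n), DyckWord.card_dyckWord_semilength_eq_catalan]

/-! ### splitting -/

section Split
variable (a b : ℕ)

def res1 (S : Finset (Fin (2*a+1+2*b))) : Finset (Fin (2*a)) :=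
  Finset.univ.filter fun x => (⟨(x:ℕ), by omega⟩ : Fin (2*a+1+2*b)) ∈ S

def res2 (S : Finset (Fin (2*a+1+2*b))) : Finset (Fin (2*b)) :=
  Finset.univ.filter fun x => (⟨2*a+1+(x:ℕ), by omega⟩ : Fin (2*a+1+2*b)) ∈ S

lemma ES_res1 (S : Finset (Fin (2*a+1+2*b))) (j : ℕ) (hj : j < 2*a) :
    ES (2*a) (res1 a b S) j = ES (2*a+1+2*b) S j := by
  rw [ES_val _ _ j hj, ES_val _ _ j (by omega)]
  simp only [res1, Finset.mem_filter, Finset.mem_univ, true_and]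

lemma ES_res2 (S : Finset (Fin (2*a+1+2*b))) (j : ℕ) (hj : j < 2*b) :
    ES (2*b) (res2 a b S) j = ES (2*a+1+2*b) S (2*a+1+j) := by
  rw [ES_val _ _ j hj, ES_val _ _ (2*a+1+j) (by omega)]
  simp only [res2, Finset.mem_filter, Finset.mem_univ, true_and]

lemma good_char (S : Finset (Fin (2*a+1+2*b))) :
    goodE (2*a+1+2*b) (2*a) (ES (2*a+1+2*b) S) ↔
      ((⟨2*a, by omega⟩ : Fin (2*a+1+2*b)) ∉ S ∧ dy a (res1 a b S) ∧ dy b (res2 a b S)) := by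
  rw [goodE_iff]
  have h1 : ∀ t ≤ 2*a, ∑ j ∈ Finset.range t, ES (2*a+1+2*b) S j
      = 2 * cnt (2*a) (res1 a b S) t := by
    intro t ht
    rw [← cnt_ES (2*a) (res1 a b S) t ht]
    exact Finset.sum_congr rfl fun j hj => (ES_res1 a b S j (by
      simp only [Finset.mem_range] at hj; omega)).symm
  have h2 : ∀ t ≤ 2*b, ∑ j ∈ Finset.range t, ES (2*a+1+2*b) S (2*a+1+j)
      = 2 * cnt (2*b) (res2 a b S) t := by
    intro t ht
    rw [← cnt_ES (2*b) (res2 a b S) t ht]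
    exact Finset.sum_congr rfl fun j hj => (ES_res2 a b S j (by
      simp only [Finset.mem_range] at hj; omega)).symm
  have h3 : ES (2*a+1+2*b) S (2*a) = 0 ↔ (⟨2*a, by omega⟩ : Fin (2*a+1+2*b)) ∉ S := by
    rw [ES_val _ _ (2*a) (by omega)]
    by_cases h : (⟨2*a, by omega⟩ : Fin (2*a+1+2*b)) ∈ S
    · simp [h]
    · simp [h]
  constructor
  · rintro ⟨c1, c2, c3, c4, c5⟩
    refine ⟨h3.mp c3, ⟨?_, ?_⟩, ⟨?_, ?_⟩⟩
    · intro t ht; have := c1 t ht; rwa [h1 t ht] at this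
    · have := c2; rw [h1 (2*a) le_rfl, cnt_all] at this; omega
    · intro t ht; have := c4 t ht; rwa [h2 t ht] at this
    · have := c5; rw [h2 (2*b) le_rfl, cnt_all] at this; omega
  · rintro ⟨c1, ⟨c2, c2'⟩, ⟨c3, c3'⟩⟩
    refine ⟨?_, ?_, h3.mpr c1, ?_, ?_⟩
    · intro t ht; rw [h1 t ht]; exact c2 t ht
    · rw [h1 (2*a) le_rfl, cnt_all, c2']
    · intro t ht; rw [h2 t ht]; exact c3 t ht
    · rw [h2 (2*b) le_rfl, cnt_all, c3']

def emb (T1 : Finset (Fin (2*a))) (T2 : Finset (Fin (2*b))) : Finset (Fin (2*a+1+2*b)) :=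
  Finset.univ.filter fun x =>
    (∃ h : (x:ℕ) < 2*a, (⟨(x:ℕ), h⟩ : Fin (2*a)) ∈ T1) ∨
    (∃ h : 2*a+1 ≤ (x:ℕ), (⟨(x:ℕ)-(2*a+1), by omega⟩ : Fin (2*b)) ∈ T2)

lemma res1_emb (T1 : Finset (Fin (2*a))) (T2 : Finset (Fin (2*b))) :
    res1 a b (emb a b T1 T2) = T1 := by
  ext x
  simp only [res1, emb, Finset.mem_filter, Finset.mem_univ, true_and, Fin.eta]
  constructor
  · rintro (⟨-, hm⟩ | ⟨h, -⟩)
    · exact hm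
    · exact absurd h (by have := x.isLt; omega)
  · intro hx
    exact Or.inl ⟨x.isLt, hx⟩

lemma res2_emb (T1 : Finset (Fin (2*a))) (T2 : Finset (Fin (2*b))) :
    res2 a b (emb a b T1 T2) = T2 := by
  ext x
  simp only [res2, emb, Finset.mem_filter, Finset.mem_univ, true_and,
    Nat.add_sub_cancel_left, Fin.eta]
  constructor
  · rintro (⟨h, -⟩ | ⟨-, hm⟩)
    · exact absurd h (by omega)
    · exact hm
  · intro hx
    exact Or.inr ⟨by omega, hx⟩

lemma notmem_emb (T1 : Finset (Fin (2*a))) (T2 : Finset (Fin (2*b))) :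
    (⟨2*a, by omega⟩ : Fin (2*a+1+2*b)) ∉ emb a b T1 T2 := by
  simp only [emb, Finset.mem_filter, Finset.mem_univ, true_and]
  rintro (⟨h, -⟩ | ⟨h, -⟩) <;> simp at h

lemma emb_res (S : Finset (Fin (2*a+1+2*b)))
    (hS : (⟨2*a, by omega⟩ : Fin (2*a+1+2*b)) ∉ S) :
    emb a b (res1 a b S) (res2 a b S) = S := by
  ext x
  simp only [emb, res1, res2, Finset.mem_filter, Finset.mem_univ, true_and, Fin.eta]
  constructor
  · rintro (⟨h, hm⟩ | ⟨h, hm⟩)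
    · convert hm using 2
    · convert hm using 2
      omega
  · intro hx
    rcases Nat.lt_trichotomy (x:ℕ) (2*a) with h | h | h
    · refine Or.inl ⟨h, ?_⟩
      convert hx using 2
    · have hxe : x = (⟨2*a, by omega⟩ : Fin (2*a+1+2*b)) := Fin.ext h
      rw [hxe] at hx
      exact absurd hx hS
    · refine Or.inr ⟨by omega, ?_⟩
      convert hx using 2
      omega

def splitEquiv :
    {S : Finset (Fin (2*a+1+2*b)) // goodE (2*a+1+2*b) (2*a) (ES (2*a+1+2*b) S)} ≃
      ({T : Finset (Fin (2*a)) // dy a T} × {T : Finset (Fin (2*b)) // dy b T}) where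
  toFun S := (⟨res1 a b S.1, ((good_char a b S.1).mp S.2).2.1⟩,
              ⟨res2 a b S.1, ((good_char a b S.1).mp S.2).2.2⟩)
  invFun T := ⟨emb a b T.1.1 T.2.1, by
    rw [good_char]
    refine ⟨notmem_emb a b _ _, ?_, ?_⟩
    · rw [res1_emb]; exact T.1.2
    · rw [res2_emb]; exact T.2.2⟩
  left_inv S := by
    apply Subtype.ext
    exact emb_res a b S.1 ((good_char a b S.1).mp S.2).1
  right_inv T := by
    apply Prod.ext <;> apply Subtype.ext
    · exact res1_emb a b T.1.1 T.2.1
    · exact res2_emb a b T.1.1 T.2.1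

lemma good_card (S : Finset (Fin (2*a+1+2*b)))
    (hg : goodE (2*a+1+2*b) (2*a) (ES (2*a+1+2*b) S)) : S.card = a + b := by
  obtain ⟨c1, c2, c3, c4, c5⟩ := (goodE_iff a b _).mp hg
  have htot : ∑ j ∈ Finset.range (2*a+1+2*b), ES (2*a+1+2*b) S j = 2*a + 2*b := by
    rw [Finset.sum_range_add, Finset.sum_range_succ, c2, c3, c5]
    omega
  rw [cnt_ES _ S _ le_rfl, cnt_all] at htot
  omega

end Split

/-! ### catalan parity -/

lemma zmod2_mul_self (x : ZMod 2) : x * x = x := by fin_cases x <;> rfl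

lemma catalan_odd_step (m : ℕ) : ((catalan (2*m+1) : ZMod 2)) = (catalan m : ZMod 2) := by
  have h := catalan_succ' (2*m)
  have h2 : ((catalan (2*m+1) : ZMod 2))
      = ∑ ij ∈ antidiagonal (2*m), (catalan ij.1 : ZMod 2) * (catalan ij.2 : ZMod 2) := by
    rw [h]
    push_cast
    rfl
  have hmm : (m, m) ∈ antidiagonal (2*m) := by
    rw [Finset.HasAntidiagonal.mem_antidiagonal]; omega
  rw [h2, ← Finset.sum_erase_add _ _ hmm]
  have hzero : ∑ ij ∈ (antidiagonal (2*m)).erase (m, m),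
      (catalan ij.1 : ZMod 2) * (catalan ij.2 : ZMod 2) = 0 := by
    apply Finset.sum_involution (fun ij _ => (ij.2, ij.1))
    · intro ij _
      simp only
      rw [mul_comm]
      exact CharTwo.add_self_eq_zero _
    · intro ij hij _
      simp only [Finset.mem_erase, Finset.HasAntidiagonal.mem_antidiagonal] at hij
      intro hc
      apply hij.1
      have h1 : ij.2 = ij.1 := congrArg Prod.fst hc
      have : ij.1 = m := by omega
      exact Prod.ext this (by omega)
    · intro ij hij
      simp only [Finset.mem_erase, Finset.HasAntidiagonal.mem_antidiagonal] at hij ⊢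
      refine ⟨?_, by omega⟩
      intro hc
      apply hij.1
      have h1 : ij.2 = m := congrArg Prod.fst hc
      exact Prod.ext (by omega) (by omega)
    · intro ij _; rfl
  rw [hzero, zero_add, zmod2_mul_self]

lemma catalan_pow2_odd (t : ℕ) : ((catalan (2^t - 1) : ZMod 2)) = 1 := by
  induction t with
  | zero => simp
  | succ t ih =>
    have h2 : 2^(t+1) - 1 = 2*(2^t - 1) + 1 := by
      have h3 : 2^(t+1) = 2 * 2^t := by rw [pow_succ]; ring
      have h4 : 1 ≤ 2^t := Nat.one_le_two_pow
      omega
    rw [h2, catalan_odd_step, ih]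

/-! ### the main count -/

lemma prod_monomial_one (m : ℕ) (S : Finset (Fin m)) (f : Fin m → (Fin m →₀ ℕ)) :
    (∏ i ∈ S, monomial (f i) (1 : ZMod 2)) = monomial (∑ i ∈ S, f i) 1 := by
  induction S using Finset.cons_induction with
  | empty => simp
  | cons i S hi ih =>
    rw [Finset.prod_cons, Finset.sum_cons, ih, monomial_mul, one_mul]

lemma toE_sum (m : ℕ) (S : Finset (Fin m)) :
    toE m (∑ i ∈ S, Finsupp.single i 2) = ES m S := by
  funext n
  unfold toE ES
  by_cases h : n < m
  · rw [dif_pos h, dif_pos h, Finsupp.finset_sum_apply]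
    rw [Finset.sum_congr rfl (fun i _ => Finsupp.single_apply)]
    exact Finset.sum_ite_eq' S (⟨n, h⟩ : Fin m) (fun _ => 2)
  · rw [dif_neg h, dif_neg h]

lemma lam_esymm_sq (m p0 n : ℕ) :
    lam m p0 ((esymm (Fin m) (ZMod 2) n) ^ 2)
      = ∑ S ∈ Finset.powersetCard n (Finset.univ : Finset (Fin m)),
          (if goodE m p0 (ES m S) then (1 : ZMod 2) else 0) := by
  have hdef : esymm (Fin m) (ZMod 2) n
      = ∑ S ∈ Finset.powersetCard n (Finset.univ : Finset (Fin m)), ∏ i ∈ S, X i := rfl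
  rw [hdef, sum_pow_char 2, map_sum]
  apply Finset.sum_congr rfl
  intro S _
  have hmono : (∏ i ∈ S, (X i : MvPolynomial (Fin m) (ZMod 2))) ^ 2
      = monomial (∑ i ∈ S, Finsupp.single i 2) 1 := by
    rw [← Finset.prod_pow, ← prod_monomial_one m S (fun i => Finsupp.single i 2)]
    exact Finset.prod_congr rfl fun i _ => X_pow_eq_monomial
  rw [hmono, lam_monomial]
  have hiff : Pd m p0 (∑ i ∈ S, Finsupp.single i 2) ↔ goodE m p0 (ES m S) := by
    unfold Pd
    rw [toE_sum]
  exact if_congr hiff rfl rfl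

lemma count_main (m p0 a b n : ℕ) (hm : m = 2*a+1+2*b) (hp : p0 = 2*a) (hn : n = a+b) :
    ∑ S ∈ Finset.powersetCard n (Finset.univ : Finset (Fin m)),
        (if goodE m p0 (ES m S) then (1 : ZMod 2) else 0)
      = (catalan a : ZMod 2) * (catalan b : ZMod 2) := by
  subst hm hp hn
  have hext : ∑ S ∈ Finset.powersetCard (a+b) (Finset.univ : Finset (Fin (2*a+1+2*b))),
        (if goodE (2*a+1+2*b) (2*a) (ES (2*a+1+2*b) S) then (1 : ZMod 2) else 0)
      = ∑ S ∈ (Finset.univ : Finset (Finset (Fin (2*a+1+2*b)))),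
        (if goodE (2*a+1+2*b) (2*a) (ES (2*a+1+2*b) S) then (1 : ZMod 2) else 0) := by
    apply Finset.sum_subset (Finset.subset_univ _)
    intro S _ hS
    rw [if_neg]
    intro hg
    exact hS (Finset.mem_powersetCard_univ.mpr (good_card a b S hg))
  rw [hext, Finset.sum_boole]
  have hcard : (Finset.univ.filter
      (fun S : Finset (Fin (2*a+1+2*b)) => goodE (2*a+1+2*b) (2*a) (ES (2*a+1+2*b) S))).card
      = catalan a * catalan b := by
    rw [← Fintype.card_subtype, Fintype.card_congr (splitEquiv a b), Fintype.card_prod,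
      card_dy, card_dy]
  rw [hcard]
  push_cast
  rfl

end LS

/-- For all `r, s ≥ 0`, set `k = 2^r + 2^s − 1`.  Then the image of
`σ_{2k}(x₁,…,x_{4k+1})²` in `F₂[x₁,…,x_{4k+1}]/I(4k+2)` is nonzero.  (Here the number of
variables is `(4k+2) − 1 = 4k+1`.) -/
theorem stmt11 (r s k : ℕ) (hk : k = 2 ^ r + 2 ^ s - 1) :
    Ideal.Quotient.mk (lsIdeal (4 * k + 1))
      (esymm (Fin (4 * k + 1)) (ZMod 2) (2 * k) ^ 2) ≠ 0 := by
  intro h0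
  rw [Ideal.Quotient.eq_zero_iff_mem] at h0
  set a := 2^(s+1) - 1 with ha
  set b := 2^(r+1) - 1 with hb
  have hs1 : (2:ℕ)^(s+1) = 2^s * 2 := pow_succ 2 s
  have hs2 : (2:ℕ)^(s+2) = 2^s * 2 * 2 := by rw [pow_succ, pow_succ]
  have hr1 : (2:ℕ)^(r+1) = 2^r * 2 := pow_succ 2 r
  have hps : (1:ℕ) ≤ 2^s := Nat.one_le_two_pow
  have hpr : (1:ℕ) ≤ 2^r := Nat.one_le_two_pow
  have hm : 4*k+1 = 2*a+1+2*b := by omega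
  have hp : 2^(s+2) - 2 = 2*a := by omega
  have hn : 2*k = a+b := by omega
  have hv := LS.lam_vanish (4*k+1) (2^(s+2) - 2) _ h0
  rw [LS.lam_esymm_sq, LS.count_main (4*k+1) (2^(s+2)-2) a b (2*k) hm hp hn] at hv
  rw [ha, hb, LS.catalan_pow2_odd, LS.catalan_pow2_odd, mul_one] at hv
  exact one_ne_zero hv
end
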